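/- arXiv:1611.06605 — 7 statements merged into one kernel-verified Lean document; each statement's English description precedes it below -/
import Mathlib

section
/- Let T be a finite tree on vertex set V and let H be any hub labeling of T. Then there exists a hierarchical hub labeling H' of T such that |H'_u| ≤ |H_u| for every vertex u ∈ V. -/
open SimpleGraph

/-- `w` lies on the unique `u`-`v` path in a tree (characterized via distances). -/
def onPath {V : Type*} (G : SimpleGraph V) (u v w : V) : Prop :=
  G.dist u w + G.dist w v = G.dist u v

/-- A hub labeling: every pair `u, v` has a common hub on the path between them. -/
def IsHubLabeling {V : Type*} (G : SimpleGraph V) (H : V → Set V) : Prop :=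
  ∀ u v : V, ∃ w : V, w ∈ H u ∧ w ∈ H v ∧ onPath G u v w

/-- A hub labeling is hierarchical if the hubs of each vertex have rank at most
the rank of the vertex, for some injective ranking `π : V → ℕ`. -/
def IsHierarchical {V : Type*} (H : V → Set V) : Prop :=
  ∃ π : V → ℕ, Function.Injective π ∧ ∀ u : V, ∀ w ∈ H u, π w ≤ π u

namespace HubAux

variable {V : Type*} {G : SimpleGraph V}

lemma onPath_comm {u v w : V} : onPath G u v w ↔ onPath G v u w := by
  unfold onPath
  have h1 : G.dist u w = G.dist w u := dist_comm
  have h2 : G.dist w v = G.dist v w := dist_comm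
  have h3 : G.dist u v = G.dist v u := dist_comm
  omega

lemma onPath_left (u v : V) : onPath G u v u := by simp [onPath]

lemma onPath_right (u v : V) : onPath G u v v := by simp [onPath]

lemma onPath_self (hc : G.Connected) {u w : V} (h : onPath G u u w) : w = u := by
  unfold onPath at h
  rw [dist_self] at h
  have : G.dist u w = 0 := by omega
  exact (hc.dist_eq_zero_iff.mp this).symm

lemma onPath_trans (hc : G.Connected) {u v w x : V}
    (h1 : onPath G u v w) (h2 : onPath G u w x) : onPath G u v x := by
  unfold onPath at *
  have t1 : G.dist x v ≤ G.dist x w + G.dist w v := hc.dist_triangle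
  have t2 : G.dist u v ≤ G.dist u x + G.dist x v := hc.dist_triangle
  omega

lemma length_eq_dist (hT : G.IsTree) {u v : V} (p : G.Walk u v) (hp : p.IsPath) :
    p.length = G.dist u v := by
  obtain ⟨q, hq, hql⟩ := hT.isConnected.exists_path_of_dist u v
  have := hT.IsAcyclic.path_unique ⟨p, hp⟩ ⟨q, hq⟩
  rw [← hql]
  exact congrArg Walk.length (congrArg Subtype.val this)

lemma onPath_iff_mem_support [DecidableEq V] (hT : G.IsTree) {u v w : V} (p : G.Walk u v)
    (hp : p.length = G.dist u v) : onPath G u v w ↔ w ∈ p.support := by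
  have hc := hT.isConnected
  constructor
  · intro h
    obtain ⟨p1, h1⟩ := (hc u w).exists_walk_length_eq_dist
    obtain ⟨p2, h2⟩ := (hc w v).exists_walk_length_eq_dist
    have hq : (p1.append p2).length = G.dist u v := by
      rw [Walk.length_append, h1, h2]; exact h
    have hqp : (p1.append p2).IsPath := Walk.isPath_of_length_eq_dist _ hq
    have hpp : p.IsPath := Walk.isPath_of_length_eq_dist _ hp
    have heq := hT.IsAcyclic.path_unique ⟨p1.append p2, hqp⟩ ⟨p, hpp⟩
    have hval : p1.append p2 = p := congrArg Subtype.val heq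
    rw [← hval]
    exact (Walk.mem_support_append_iff _ _).mpr (Or.inl (Walk.end_mem_support p1))
  · intro h
    have l1 : G.dist u w ≤ (p.takeUntil w h).length := dist_le _
    have l2 : G.dist w v ≤ (p.dropUntil w h).length := dist_le _
    have hlen : (p.takeUntil w h).length + (p.dropUntil w h).length = p.length := by
      rw [← Walk.length_append, p.take_spec h]
    have tri : G.dist u v ≤ G.dist u w + G.dist w v := hc.dist_triangle
    unfold onPath
    omega

lemma getVert_one_takeUntil [DecidableEq V] {v w u : V} (p : G.Walk v w) (h : u ∈ p.support)
    (hu : u ≠ v) : (p.takeUntil u h).getVert 1 = p.getVert 1 := by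
  have hl : 0 < (p.takeUntil u h).length := by
    rcases Nat.eq_zero_or_pos (p.takeUntil u h).length with h0 | h0
    · exact absurd (Walk.eq_of_length_eq_zero h0) hu.symm
    · exact h0
  conv_rhs => rw [← p.take_spec h]
  rw [Walk.getVert_append]
  rcases Nat.lt_or_ge 1 (p.takeUntil u h).length with hlt | hge
  · rw [if_pos hlt]
  · have hone : (p.takeUntil u h).length = 1 := by omega
    have e1 : (p.takeUntil u h).getVert 1 = u := by
      rw [← hone]; exact Walk.getVert_length _
    have e2 : (p.dropUntil u h).getVert (1 - (p.takeUntil u h).length) = u := by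
      rw [hone]; exact Walk.getVert_zero _
    rw [if_neg (by omega), e1, e2]

lemma exists_median [Fintype V] [DecidableEq V] (hT : G.IsTree) (x y u : V) :
    ∃ m, onPath G x y m ∧ onPath G x u m ∧ onPath G u y m := by
  classical
  have hc := hT.isConnected
  have hxF : x ∈ Finset.univ.filter (fun w => onPath G x y w ∧ onPath G x u w) := by
    simp [onPath_left]
  obtain ⟨m, hmF, hmax⟩ := Finset.exists_max_image _ (fun w => G.dist x w) ⟨x, hxF⟩
  simp only [Finset.mem_filter, Finset.mem_univ, true_and] at hmF
  obtain ⟨hm1, hm2⟩ := hmF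
  refine ⟨m, hm1, hm2, ?_⟩
  by_cases hmu : m = u
  · subst hmu; exact onPath_left m y
  by_cases hmy : m = y
  · subst hmy; exact onPath_right u m
  obtain ⟨r1, hr1⟩ := (hc m u).exists_walk_length_eq_dist
  obtain ⟨r2, hr2⟩ := (hc m y).exists_walk_length_eq_dist
  have hr1p : r1.IsPath := Walk.isPath_of_length_eq_dist _ hr1
  have hr2p : r2.IsPath := Walk.isPath_of_length_eq_dist _ hr2
  have h1pos : 0 < r1.length := by
    rcases Nat.eq_zero_or_pos r1.length with h0 | h0
    · exact absurd (Walk.eq_of_length_eq_zero h0) hmu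
    · exact h0
  have h2pos : 0 < r2.length := by
    rcases Nat.eq_zero_or_pos r2.length with h0 | h0
    · exact absurd (Walk.eq_of_length_eq_zero h0) hmy
    · exact h0
  by_cases hab : r1.getVert 1 = r2.getVert 1
  · -- contradiction with maximality
    exfalso
    set a := r1.getVert 1 with ha
    have haS : a ∈ r1.support := Walk.mem_support_iff_exists_getVert.mpr ⟨1, rfl, h1pos⟩
    have ha1 : onPath G m u a := (onPath_iff_mem_support hT r1 hr1).mpr haS
    have hbS : r2.getVert 1 ∈ r2.support := Walk.mem_support_iff_exists_getVert.mpr ⟨1, rfl, h2pos⟩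
    have ha2 : onPath G m y a := by
      rw [hab]; exact (onPath_iff_mem_support hT r2 hr2).mpr hbS
    have hadj : G.Adj m a := by
      have := r1.adj_getVert_succ (i := 0) h1pos
      simpa [Walk.getVert_zero] using this
    have hdma : G.dist m a = 1 := (dist_eq_one_iff_adj).mpr hadj
    unfold onPath at ha1 ha2 hm1 hm2
    have tri1 : G.dist x a ≤ G.dist x m + G.dist m a := hc.dist_triangle
    have tri2 : G.dist x u ≤ G.dist x a + G.dist a u := hc.dist_triangle
    have tri3 : G.dist x y ≤ G.dist x a + G.dist a y := hc.dist_triangle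
    have hxa : G.dist x a = G.dist x m + 1 := by omega
    have haF : a ∈ Finset.univ.filter (fun w => onPath G x y w ∧ onPath G x u w) := by
      simp only [Finset.mem_filter, Finset.mem_univ, true_and]
      constructor <;> (unfold onPath; omega)
    have := hmax a haF
    omega
  · -- supports of r1 r2 meet only at m
    have hdisj : ∀ z, z ∈ r1.support → z ∈ r2.support → z = m := by
      intro z hz1 hz2
      by_contra hzm
      have e : r1.takeUntil z hz1 = r2.takeUntil z hz2 := by
        have := hT.IsAcyclic.path_unique ⟨r1.takeUntil z hz1, hr1p.takeUntil hz1⟩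
          ⟨r2.takeUntil z hz2, hr2p.takeUntil hz2⟩
        exact congrArg Subtype.val this
      apply hab
      rw [← getVert_one_takeUntil r1 hz1 hzm, ← getVert_one_takeUntil r2 hz2 hzm, e]
    have hqp : (r1.reverse.append r2).IsPath := by
      rw [Walk.isPath_def, Walk.support_append, List.nodup_append]
      refine ⟨?_, ?_, ?_⟩
      · exact (hr1p.reverse).support_nodup
      · exact (hr2p.support_nodup).tail
      · intro z hz1 z' hz2 hzz; subst hzz
        have hz1' : z ∈ r1.support := by
          rw [Walk.support_reverse] at hz1
          exact List.mem_reverse.mp hz1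
        have hz2' : z ∈ r2.support := List.mem_of_mem_tail hz2
        have := hdisj z hz1' hz2'
        subst this
        have hnd := hr2p.support_nodup
        rw [r2.support_eq_cons] at hnd
        exact (List.nodup_cons.mp hnd).1 hz2
    have hql : (r1.reverse.append r2).length = G.dist u y :=
      length_eq_dist hT _ hqp
    rw [Walk.length_append, Walk.length_reverse, hr1, hr2] at hql
    unfold onPath
    have : G.dist u m = G.dist m u := dist_comm
    omega

lemma onPath_split [Fintype V] [DecidableEq V] (hT : G.IsTree) {x y u w : V}
    (h : onPath G x y w) : onPath G x u w ∨ onPath G u y w := by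
  have hc := hT.isConnected
  obtain ⟨m, hm1, hm2, hm3⟩ := exists_median hT x y u
  obtain ⟨p1, h1⟩ := (hc x m).exists_walk_length_eq_dist
  obtain ⟨p2, h2⟩ := (hc m y).exists_walk_length_eq_dist
  have hq : (p1.append p2).length = G.dist x y := by
    rw [Walk.length_append, h1, h2]; exact hm1
  have hw : w ∈ (p1.append p2).support := (onPath_iff_mem_support hT _ hq).mp h
  rcases (Walk.mem_support_append_iff _ _).mp hw with h' | h'
  · left
    exact onPath_trans hc hm2 ((onPath_iff_mem_support hT p1 h1).mpr h')
  · right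
    have hmw : onPath G m y w := (onPath_iff_mem_support hT p2 h2).mpr h'
    rw [onPath_comm] at hm3 hmw ⊢
    exact onPath_trans hc hm3 hmw

lemma helly3 [Fintype V] [DecidableEq V] (hT : G.IsTree) {A B C : Set V}
    (hA : ∀ x ∈ A, ∀ y ∈ A, ∀ w, onPath G x y w → w ∈ A)
    (hB : ∀ x ∈ B, ∀ y ∈ B, ∀ w, onPath G x y w → w ∈ B)
    (hC : ∀ x ∈ C, ∀ y ∈ C, ∀ w, onPath G x y w → w ∈ C)
    (hAB : (A ∩ B).Nonempty) (hAC : (A ∩ C).Nonempty) (hBC : (B ∩ C).Nonempty) :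
    (A ∩ B ∩ C).Nonempty := by
  obtain ⟨c, hcA, hcB⟩ := hAB
  obtain ⟨b, hbA, hbC⟩ := hAC
  obtain ⟨a, haB, haC⟩ := hBC
  obtain ⟨m, hm1, hm2, hm3⟩ := exists_median hT a b c
  refine ⟨m, ⟨?_, ?_⟩, ?_⟩
  · exact hA c hcA b hbA m hm3
  · -- m ∈ B : onPath a c m
    exact hB a haB c hcB m hm2
  · -- m ∈ C : onPath a b m
    exact hC a haC b hbC m hm1

lemma helly [Fintype V] [DecidableEq V] (hT : G.IsTree) {ι : Type*} [DecidableEq ι]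
    (s : Finset ι) (A : ι → Set V) :
    (∀ i ∈ s, ∀ x ∈ A i, ∀ y ∈ A i, ∀ w, onPath G x y w → w ∈ A i) →
    (∀ i ∈ s, ∀ j ∈ s, (A i ∩ A j).Nonempty) → s.Nonempty →
    ∃ r, ∀ i ∈ s, r ∈ A i := by
  classical
  induction s using Finset.induction_on generalizing A with
  | empty => intro _ _ hs; exact absurd hs (by simp)
  | @insert i t hit IH =>
    intro hconv hpair hs
    rcases t.eq_empty_or_nonempty with rfl | ht
    · obtain ⟨r, hr, _⟩ := hpair i (Finset.mem_insert_self i ∅) i (Finset.mem_insert_self i ∅)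
      exact ⟨r, by simpa using hr⟩
    · have hmem : ∀ j ∈ t, j ∈ insert i t := fun j hj => Finset.mem_insert_of_mem hj
      have hi : i ∈ insert i t := Finset.mem_insert_self i t
      obtain ⟨r, hr⟩ := IH (fun j => A j ∩ A i)
        (by
          intro j hj x hx y hy w hw
          exact ⟨hconv j (hmem j hj) x hx.1 y hy.1 w hw, hconv i hi x hx.2 y hy.2 w hw⟩)
        (by
          intro j hj k hk
          have h3 := helly3 hT (hconv j (hmem j hj)) (hconv k (hmem k hk)) (hconv i hi)
            (hpair j (hmem j hj) k (hmem k hk)) (hpair j (hmem j hj) i hi)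
            (hpair k (hmem k hk) i hi)
          obtain ⟨z, ⟨hz1, hz2⟩, hz3⟩ := h3
          exact ⟨z, ⟨hz1, hz3⟩, hz2, hz3⟩)
        ht
      refine ⟨r, ?_⟩
      intro j hj
      rcases Finset.mem_insert.mp hj with rfl | hj'
      · obtain ⟨k, hk⟩ := ht
        exact (hr k hk).2
      · exact (hr j hj').1

lemma merge [Fintype V] [DecidableEq V] (H : V → Set V) (K : Finset (Finset V)) :
    (∀ c1 ∈ K, ∀ c2 ∈ K, c1 ≠ c2 → ∀ z, z ∈ c1 → z ∈ c2 → False) →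
    (∀ c ∈ K, ∃ (H' : V → Set V) (π : V → ℕ),
       (∀ u ∈ c, ∀ v ∈ c, ∃ w ∈ c, w ∈ H' u ∧ w ∈ H' v ∧ onPath G u v w) ∧
       (∀ u ∈ c, H' u ⊆ ↑c) ∧ Set.InjOn π ↑c ∧ (∀ u ∈ c, π u < c.card) ∧
       (∀ u ∈ c, ∀ w ∈ H' u, π w ≤ π u) ∧
       (∀ u ∈ c, (H' u).ncard ≤ (H u ∩ ↑c).ncard)) →
    ∃ (H' : V → Set V) (π : V → ℕ),
       Set.InjOn π ↑(K.biUnion id) ∧ (∀ u ∈ K.biUnion id, π u < (K.biUnion id).card) ∧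
       (∀ c ∈ K, (∀ u ∈ c, ∀ v ∈ c, ∃ w ∈ c, w ∈ H' u ∧ w ∈ H' v ∧ onPath G u v w) ∧
          (∀ u ∈ c, H' u ⊆ ↑c) ∧ (∀ u ∈ c, ∀ w ∈ H' u, π w ≤ π u) ∧
          (∀ u ∈ c, (H' u).ncard ≤ (H u ∩ ↑c).ncard)) := by
  classical
  induction K using Finset.induction_on with
  | empty =>
    intro _ _
    exact ⟨fun _ => ∅, fun _ => 0, by simp, by simp, by simp⟩
  | @insert c K' hcK IH =>
    intro hdisj hdata
    have hcI : c ∈ insert c K' := Finset.mem_insert_self c K'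
    obtain ⟨Hc, πc, pc1, pc2, pc3, pc4, pc5, pc6⟩ := hdata c hcI
    obtain ⟨H₁, π₁, q1, q2, q3⟩ := IH
      (fun c1 h1 c2 h2 => hdisj c1 (Finset.mem_insert_of_mem h1) c2 (Finset.mem_insert_of_mem h2))
      (fun c' h' => hdata c' (Finset.mem_insert_of_mem h'))
    -- disjointness of c from union of K'
    have hcU : ∀ z ∈ K'.biUnion id, z ∉ c := by
      intro z hz hzc
      obtain ⟨c', hc', hzc'⟩ := Finset.mem_biUnion.mp hz
      exact hdisj c hcI c' (Finset.mem_insert_of_mem hc')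
        (fun h => hcK (h ▸ hc')) z hzc hzc'
    have hUeq : (insert c K').biUnion id = c ∪ K'.biUnion id := Finset.biUnion_insert
    have hdisjF : Disjoint c (K'.biUnion id) :=
      Finset.disjoint_right.mpr hcU
    have hcard : ((insert c K').biUnion id).card = c.card + (K'.biUnion id).card := by
      rw [hUeq, Finset.card_union_of_disjoint hdisjF]
    refine ⟨fun u => if u ∈ c then Hc u else H₁ u,
            fun u => if u ∈ c then πc u else π₁ u + c.card, ?_, ?_, ?_⟩
    · -- InjOn
      intro u hu v hv heq
      simp only [Finset.coe_biUnion, Set.mem_iUnion, Finset.mem_coe] at hu hv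
      by_cases huc : u ∈ c <;> by_cases hvc : v ∈ c <;> simp only [huc, hvc, if_pos, if_neg,
        if_true, if_false] at heq
      · exact pc3 huc hvc heq
      · have := pc4 u huc; omega
      · have := pc4 v hvc; omega
      · have huU : u ∈ K'.biUnion id := by
          rw [hUeq] at *
          obtain ⟨c', hc', hu'⟩ := hu
          rcases Finset.mem_insert.mp hc' with rfl | h
          · exact absurd hu' huc
          · exact Finset.mem_biUnion.mpr ⟨c', h, hu'⟩
        have hvU : v ∈ K'.biUnion id := by
          obtain ⟨c', hc', hv'⟩ := hv
          rcases Finset.mem_insert.mp hc' with rfl | h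
          · exact absurd hv' hvc
          · exact Finset.mem_biUnion.mpr ⟨c', h, hv'⟩
        exact q1 (by simpa using huU) (by simpa using hvU) (by omega)
    · -- bound
      intro u hu
      dsimp only
      rw [hUeq] at hu
      rcases Finset.mem_union.mp hu with h | h
      · rw [if_pos h, hcard]
        have := pc4 u h
        omega
      · rw [if_neg (fun hc' => hcU u h hc'), hcard]
        have := q2 u h
        omega
    · -- per class
      intro c' hc'
      rcases Finset.mem_insert.mp hc' with rfl | h
      · refine ⟨?_, ?_, ?_, ?_⟩
        · intro u hu v hv
          obtain ⟨w, hw1, hw2, hw3, hw4⟩ := pc1 u hu v hv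
          exact ⟨w, hw1, by dsimp only; rw [if_pos hu]; exact hw2,
            by dsimp only; rw [if_pos hv]; exact hw3, hw4⟩
        · intro u hu; dsimp only; rw [if_pos hu]; exact pc2 u hu
        · intro u hu w hw
          dsimp only at hw ⊢
          rw [if_pos hu] at hw
          have hwc : w ∈ c' := pc2 u hu hw
          rw [if_pos hu, if_pos hwc]
          exact pc5 u hu w hw
        · intro u hu; dsimp only; rw [if_pos hu]; exact pc6 u hu
      · obtain ⟨r1, r2, r3, r4⟩ := q3 c' h
        have hnc : ∀ u ∈ c', u ∉ c := by
          intro u hu hc2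
          exact hdisj c hcI c' (Finset.mem_insert_of_mem h) (fun he => hcK (he ▸ h)) u hc2 hu
        refine ⟨?_, ?_, ?_, ?_⟩
        · intro u hu v hv
          obtain ⟨w, hw1, hw2, hw3, hw4⟩ := r1 u hu v hv
          exact ⟨w, hw1, by dsimp only; rw [if_neg (hnc u hu)]; exact hw2,
            by dsimp only; rw [if_neg (hnc v hv)]; exact hw3, hw4⟩
        · intro u hu; dsimp only; rw [if_neg (hnc u hu)]; exact r2 u hu
        · intro u hu w hw
          dsimp only at hw ⊢
          rw [if_neg (hnc u hu)] at hw
          have hwc : w ∈ c' := r2 u hu hw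
          rw [if_neg (hnc u hu), if_neg (hnc w hwc)]
          have := r3 u hu w hw
          omega
        · intro u hu; dsimp only; rw [if_neg (hnc u hu)]; exact r4 u hu

lemma main_ind [Fintype V] [DecidableEq V] (hT : G.IsTree) (H : V → Set V) :
    ∀ (n : ℕ) (S : Finset V), S.card ≤ n →
    (∀ x ∈ S, ∀ y ∈ S, ∀ w, onPath G x y w → w ∈ S) →
    (∀ u ∈ S, ∀ v ∈ S, ∃ w ∈ S, w ∈ H u ∧ w ∈ H v ∧ onPath G u v w) →
    ∃ (H' : V → Set V) (π : V → ℕ),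
      (∀ u ∈ S, ∀ v ∈ S, ∃ w ∈ S, w ∈ H' u ∧ w ∈ H' v ∧ onPath G u v w) ∧
      (∀ u ∈ S, H' u ⊆ ↑S) ∧ Set.InjOn π ↑S ∧ (∀ u ∈ S, π u < S.card) ∧
      (∀ u ∈ S, ∀ w ∈ H' u, π w ≤ π u) ∧
      (∀ u ∈ S, (H' u).ncard ≤ (H u ∩ ↑S).ncard) := by
  intro n
  induction n with
  | zero =>
    intro S hcard _ _
    have hSe : S = ∅ := Finset.card_eq_zero.mp (Nat.le_zero.mp hcard)
    subst hSe
    exact ⟨fun _ => ∅, fun _ => 0, by simp, by simp, by simp, by simp, by simp, by simp⟩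
  | succ n IH =>
    intro S hcard hconv hhub
    rcases S.eq_empty_or_nonempty with rfl | hS
    · exact ⟨fun _ => ∅, fun _ => 0, by simp, by simp, by simp, by simp, by simp, by simp⟩
    classical
    have hc := hT.isConnected
    set R : V → Set V := fun u => {z | ∃ w, w ∈ H u ∧ w ∈ (↑S : Set V) ∧ onPath G u w z}
      with hR
    have hRconv : ∀ u ∈ S, ∀ x ∈ R u, ∀ y ∈ R u, ∀ w, onPath G x y w → w ∈ R u := by
      intro u hu x hx y hy w hw
      obtain ⟨w1, hw1H, hw1S, hw1P⟩ := hx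
      obtain ⟨w2, hw2H, hw2S, hw2P⟩ := hy
      rcases onPath_split hT hw (u := u) with h' | h'
      · exact ⟨w1, hw1H, hw1S, onPath_trans hc hw1P (onPath_comm.mp h')⟩
      · exact ⟨w2, hw2H, hw2S, onPath_trans hc hw2P h'⟩
    have hRpair : ∀ u ∈ S, ∀ v ∈ S, (R u ∩ R v).Nonempty := by
      intro u hu v hv
      obtain ⟨w, hwS, hwu, hwv, hwP⟩ := hhub u hu v hv
      exact ⟨w, ⟨w, hwu, Finset.mem_coe.mpr hwS, onPath_right u w⟩,
        ⟨w, hwv, Finset.mem_coe.mpr hwS, onPath_right v w⟩⟩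
    obtain ⟨r, hr⟩ := helly hT S R hRconv hRpair hS
    have hrS : r ∈ S := by
      obtain ⟨u0, hu0⟩ := hS
      obtain ⟨w, hwH, hwS, hwP⟩ := hr u0 hu0
      exact hconv u0 hu0 w (Finset.mem_coe.mp hwS) r hwP
    set E := S.erase r with hE
    set Cl : V → Finset V := fun u => E.filter (fun v => ¬ onPath G u v r) with hCl
    have hClE : ∀ u, Cl u ⊆ E := fun u => Finset.filter_subset _ _
    have hES : E ⊆ S := Finset.erase_subset _ _
    have hself : ∀ u ∈ E, u ∈ Cl u := by
      intro u hu
      refine Finset.mem_filter.mpr ⟨hu, fun h => ?_⟩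
      exact Finset.ne_of_mem_erase hu (onPath_self hc h).symm
    have hCl_eq : ∀ u ∈ E, ∀ v ∈ Cl u, Cl u = Cl v := by
      intro u hu v hv
      obtain ⟨hvE, hrel⟩ := Finset.mem_filter.mp hv
      ext z
      simp only [hCl, Finset.mem_filter]
      constructor
      · rintro ⟨hzE, hz⟩
        refine ⟨hzE, fun h => ?_⟩
        rcases onPath_split hT h (u := u) with h' | h'
        · exact hrel (onPath_comm.mp h')
        · exact hz h'
      · rintro ⟨hzE, hz⟩
        refine ⟨hzE, fun h => ?_⟩
        rcases onPath_split hT h (u := v) with h' | h'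
        · exact hrel h'
        · exact hz h'
    have hClconv : ∀ u ∈ E, ∀ x ∈ Cl u, ∀ y ∈ Cl u, ∀ w, onPath G x y w → w ∈ Cl u := by
      intro u hu x hx y hy w hw
      obtain ⟨hxE, hxrel⟩ := Finset.mem_filter.mp hx
      obtain ⟨hyE, hyrel⟩ := Finset.mem_filter.mp hy
      have hwS : w ∈ S := hconv x (hES hxE) y (hES hyE) w hw
      have hrxy : ¬ onPath G x y r := by
        intro h
        rcases onPath_split hT h (u := u) with h' | h'
        · exact hxrel (onPath_comm.mp h')
        · exact hyrel h'
      have hwr : w ≠ r := fun h => hrxy (h ▸ hw)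
      refine Finset.mem_filter.mpr ⟨Finset.mem_erase.mpr ⟨hwr, hwS⟩, fun h => ?_⟩
      rcases onPath_split hT h (u := x) with h' | h'
      · exact hxrel h'
      · exact hrxy (onPath_trans hc hw h')
    set K : Finset (Finset V) := E.image Cl with hK
    have hKdisj : ∀ c1 ∈ K, ∀ c2 ∈ K, c1 ≠ c2 → ∀ z, z ∈ c1 → z ∈ c2 → False := by
      intro c1 h1 c2 h2 hne z hz1 hz2
      obtain ⟨u1, hu1, rfl⟩ := Finset.mem_image.mp h1
      obtain ⟨u2, hu2, rfl⟩ := Finset.mem_image.mp h2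
      exact hne ((hCl_eq u1 hu1 z hz1).trans (hCl_eq u2 hu2 z hz2).symm)
    have hU : K.biUnion id = E := by
      ext z
      simp only [Finset.mem_biUnion, hK, Finset.mem_image, id]
      constructor
      · rintro ⟨c, ⟨u, hu, rfl⟩, hz⟩
        exact hClE u hz
      · intro hz
        exact ⟨Cl z, ⟨z, hz, rfl⟩, hself z hz⟩
    have hclassdata : ∀ c ∈ K, ∃ (H' : V → Set V) (π : V → ℕ),
        (∀ u ∈ c, ∀ v ∈ c, ∃ w ∈ c, w ∈ H' u ∧ w ∈ H' v ∧ onPath G u v w) ∧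
        (∀ u ∈ c, H' u ⊆ ↑c) ∧ Set.InjOn π ↑c ∧ (∀ u ∈ c, π u < c.card) ∧
        (∀ u ∈ c, ∀ w ∈ H' u, π w ≤ π u) ∧
        (∀ u ∈ c, (H' u).ncard ≤ (H u ∩ ↑c).ncard) := by
      intro c hcK
      obtain ⟨u0, hu0, rfl⟩ := Finset.mem_image.mp hcK
      apply IH
      · have h1 : (Cl u0).card ≤ E.card := Finset.card_le_card (hClE u0)
        have h2 : E.card = S.card - 1 := Finset.card_erase_of_mem hrS
        have h3 : 1 ≤ S.card := Finset.card_pos.mpr hS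
        omega
      · exact hClconv u0 hu0
      · intro u hu v hv
        obtain ⟨w, hwS, hwu, hwv, hwP⟩ := hhub u (hES (hClE u0 hu)) v (hES (hClE u0 hv))
        exact ⟨w, hClconv u0 hu0 u hu v hv w hwP, hwu, hwv, hwP⟩
    obtain ⟨H₀, π₀, m1, m2, m3⟩ := merge H K hKdisj hclassdata
    rw [hU] at m1 m2
    refine ⟨fun u => if u = r then {r} else if u ∈ E then insert r (H₀ u) else ∅,
            fun u => if u = r then 0 else if u ∈ E then π₀ u + 1 else 0,
            ?_, ?_, ?_, ?_, ?_, ?_⟩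
    · -- hub property
      intro u hu v hv
      dsimp only
      by_cases hur : u = r
      · by_cases hvr : v = r
        · exact ⟨r, hrS, by simp [hur], by simp [hvr], by rw [hur]; exact onPath_left r v⟩
        · have hvE : v ∈ E := Finset.mem_erase.mpr ⟨hvr, hv⟩
          refine ⟨r, hrS, by simp [hur], ?_, by rw [hur]; exact onPath_left r v⟩
          rw [if_neg hvr, if_pos hvE]
          exact Set.mem_insert r _
      · have huE : u ∈ E := Finset.mem_erase.mpr ⟨hur, hu⟩
        by_cases hvr : v = r
        · refine ⟨r, hrS, ?_, by simp [hvr], by rw [hvr]; exact onPath_right u r⟩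
          rw [if_neg hur, if_pos huE]
          exact Set.mem_insert r _
        · have hvE : v ∈ E := Finset.mem_erase.mpr ⟨hvr, hv⟩
          by_cases hsame : v ∈ Cl u
          · have hcK2 : Cl u ∈ K := Finset.mem_image_of_mem Cl huE
            obtain ⟨w, hwc, hw2, hw3, hw4⟩ := (m3 (Cl u) hcK2).1 u (hself u huE) v hsame
            have hwE : w ∈ E := hClE u hwc
            have hwr : w ≠ r := (Finset.mem_erase.mp hwE).1
            refine ⟨w, hES hwE, ?_, ?_, hw4⟩
            · rw [if_neg hur, if_pos huE]
              exact Set.mem_insert_of_mem r hw2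
            · rw [if_neg hvr, if_pos hvE]
              exact Set.mem_insert_of_mem r hw3
          · have hpr : onPath G u v r := by
              by_contra hnot
              exact hsame (Finset.mem_filter.mpr ⟨hvE, hnot⟩)
            refine ⟨r, hrS, ?_, ?_, hpr⟩
            · rw [if_neg hur, if_pos huE]
              exact Set.mem_insert r _
            · rw [if_neg hvr, if_pos hvE]
              exact Set.mem_insert r _
    · -- subset
      intro u hu
      dsimp only
      by_cases hur : u = r
      · rw [if_pos hur]
        intro z hz
        rw [Set.mem_singleton_iff] at hz
        subst hz
        exact Finset.mem_coe.mpr hrS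
      · have huE : u ∈ E := Finset.mem_erase.mpr ⟨hur, hu⟩
        rw [if_neg hur, if_pos huE]
        intro z hz
        rcases Set.mem_insert_iff.mp hz with rfl | hz'
        · exact Finset.mem_coe.mpr hrS
        · have hcK2 : Cl u ∈ K := Finset.mem_image_of_mem Cl huE
          have := (m3 (Cl u) hcK2).2.1 u (hself u huE) hz'
          exact Finset.mem_coe.mpr (hES (hClE u (Finset.mem_coe.mp this)))
    · -- InjOn
      intro u hu v hv heq
      dsimp only at heq
      have hu' : u ∈ S := Finset.mem_coe.mp hu
      have hv' : v ∈ S := Finset.mem_coe.mp hv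
      by_cases hur : u = r <;> by_cases hvr : v = r
      · rw [hur, hvr]
      · have hvE : v ∈ E := Finset.mem_erase.mpr ⟨hvr, hv'⟩
        rw [if_pos hur, if_neg hvr, if_pos hvE] at heq
        omega
      · have huE : u ∈ E := Finset.mem_erase.mpr ⟨hur, hu'⟩
        rw [if_neg hur, if_pos huE, if_pos hvr] at heq
        omega
      · have huE : u ∈ E := Finset.mem_erase.mpr ⟨hur, hu'⟩
        have hvE : v ∈ E := Finset.mem_erase.mpr ⟨hvr, hv'⟩
        rw [if_neg hur, if_pos huE, if_neg hvr, if_pos hvE] at heq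
        exact m1 (Finset.mem_coe.mpr huE) (Finset.mem_coe.mpr hvE) (by omega)
    · -- bound
      intro u hu
      dsimp only
      have hpos : 0 < S.card := Finset.card_pos.mpr hS
      by_cases hur : u = r
      · rw [if_pos hur]; exact hpos
      · have huE : u ∈ E := Finset.mem_erase.mpr ⟨hur, hu⟩
        rw [if_neg hur, if_pos huE]
        have := m2 u huE
        have hEc : E.card = S.card - 1 := Finset.card_erase_of_mem hrS
        omega
    · -- hierarchy
      intro u hu w hw
      dsimp only at hw ⊢
      by_cases hur : u = r
      · rw [if_pos hur] at hw
        rw [Set.mem_singleton_iff] at hw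
        rw [hw, if_pos rfl]
        exact Nat.zero_le _
      · have huE : u ∈ E := Finset.mem_erase.mpr ⟨hur, hu⟩
        rw [if_neg hur, if_pos huE] at hw
        rw [if_neg hur, if_pos huE]
        rcases Set.mem_insert_iff.mp hw with rfl | hw'
        · rw [if_pos rfl]
          omega
        · have hcK2 : Cl u ∈ K := Finset.mem_image_of_mem Cl huE
          have hwc : w ∈ Cl u :=
            Finset.mem_coe.mp ((m3 (Cl u) hcK2).2.1 u (hself u huE) hw')
          have hwE : w ∈ E := hClE u hwc
          have hwr : w ≠ r := (Finset.mem_erase.mp hwE).1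
          rw [if_neg hwr, if_pos hwE]
          have := (m3 (Cl u) hcK2).2.2.1 u (hself u huE) w hw'
          omega
    · -- ncard
      intro u hu
      dsimp only
      obtain ⟨w0, hw0H, hw0S, hw0P⟩ := hr u hu
      by_cases hur : u = r
      · rw [if_pos hur]
        have hne : (H u ∩ ↑S).Nonempty := ⟨w0, hw0H, hw0S⟩
        have h1 : ({r} : Set V).ncard = 1 := Set.ncard_singleton r
        have h2 : 0 < (H u ∩ ↑S).ncard := (Set.ncard_pos (Set.toFinite _)).mpr hne
        omega
      · have huE : u ∈ E := Finset.mem_erase.mpr ⟨hur, hu⟩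
        rw [if_neg hur, if_pos huE]
        have hcK2 : Cl u ∈ K := Finset.mem_image_of_mem Cl huE
        have hb1 : (insert r (H₀ u)).ncard ≤ (H₀ u).ncard + 1 := Set.ncard_insert_le _ _
        have hb2 : (H₀ u).ncard ≤ (H u ∩ ↑(Cl u)).ncard :=
          (m3 (Cl u) hcK2).2.2.2 u (hself u huE)
        have hw0nc : w0 ∉ Cl u := fun hmem => (Finset.mem_filter.mp hmem).2 hw0P
        have hsub : (H u ∩ ↑(Cl u)) ⊆ (H u ∩ ↑S) \ {w0} := by
          intro z hz
          obtain ⟨hz1, hz2⟩ := hz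
          refine ⟨⟨hz1, Finset.mem_coe.mpr (hES (hClE u (Finset.mem_coe.mp hz2)))⟩, ?_⟩
          intro h
          rw [Set.mem_singleton_iff] at h
          exact hw0nc (h ▸ (Finset.mem_coe.mp hz2))
        have hb3 : (H u ∩ ↑(Cl u)).ncard ≤ ((H u ∩ ↑S) \ {w0}).ncard :=
          Set.ncard_le_ncard hsub (Set.toFinite _)
        have hb4 : ((H u ∩ ↑S) \ {w0}).ncard < (H u ∩ ↑S).ncard :=
          Set.ncard_diff_singleton_lt_of_mem (⟨hw0H, hw0S⟩ : w0 ∈ H u ∩ ↑S) (Set.toFinite _)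
        omega

end HubAux

theorem hub_labeling_to_hierarchical {V : Type*} [Fintype V]
    (G : SimpleGraph V) (hT : G.IsTree)
    (H : V → Set V) (hH : IsHubLabeling G H) :
    ∃ H' : V → Set V, IsHubLabeling G H' ∧ IsHierarchical H' ∧
      ∀ u : V, (H' u).ncard ≤ (H u).ncard := by
  classical
  obtain ⟨H', π, p1, p2, p3, p4, p5, p6⟩ :=
    HubAux.main_ind hT H (Finset.univ.card) Finset.univ le_rfl
      (fun x _ y _ w _ => Finset.mem_univ w)
      (fun u _ v _ => by
        obtain ⟨w, hw1, hw2, hw3⟩ := hH u v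
        exact ⟨w, Finset.mem_univ w, hw1, hw2, hw3⟩)
  refine ⟨H', ?_, ⟨π, ?_, ?_⟩, ?_⟩
  · intro u v
    obtain ⟨w, _, hw2, hw3, hw4⟩ := p1 u (Finset.mem_univ u) v (Finset.mem_univ v)
    exact ⟨w, hw2, hw3, hw4⟩
  · intro a b hab
    exact p3 (by simp) (by simp) hab
  · intro u w hw
    exact p5 u (Finset.mem_univ u) w hw
  · intro u
    have := p6 u (Finset.mem_univ u)
    simpa using this
end

section
/- For every finite tree T there exists a hub labeling H of T that is hierarchical and minimizes the ℓ1-cost ∑_{u ∈ V} |H_u| over all hub labelings of T. -/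
open SimpleGraph

namespace TreeHubAux

variable {V : Type*} {G : SimpleGraph V}

noncomputable def tpath (hT : G.IsTree) (u v : V) : G.Walk u v :=
  (hT.existsUnique_path u v).choose

lemma tpath_isPath (hT : G.IsTree) (u v : V) : (tpath hT u v).IsPath :=
  (hT.existsUnique_path u v).choose_spec.1

lemma tpath_unique (hT : G.IsTree) {u v : V} (p : G.Walk u v) (hp : p.IsPath) :
    p = tpath hT u v :=
  (hT.existsUnique_path u v).choose_spec.2 p hp

lemma tpath_length (hT : G.IsTree) (u v : V) : (tpath hT u v).length = G.dist u v := by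
  obtain ⟨p, hp, hl⟩ := hT.isConnected.exists_path_of_dist u v
  rw [tpath_unique hT p hp] at hl
  exact hl

lemma onPath_iff (hT : G.IsTree) {u v w : V} :
    onPath G u v w ↔ w ∈ (tpath hT u v).support := by
  constructor
  · intro h
    obtain ⟨p1, hp1⟩ := hT.isConnected.exists_walk_length_eq_dist u w
    obtain ⟨p2, hp2⟩ := hT.isConnected.exists_walk_length_eq_dist w v
    have hlen : (p1.append p2).length = G.dist u v := by
      rw [Walk.length_append, hp1, hp2]; exact h
    have hpath := (p1.append p2).isPath_of_length_eq_dist hlen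
    rw [← tpath_unique hT _ hpath, Walk.mem_support_append_iff]
    exact Or.inl p1.end_mem_support
  · intro h
    obtain ⟨q, r, hqr⟩ := Walk.mem_support_iff_exists_append.mp h
    have h1 : G.dist u w ≤ q.length := dist_le q
    have h2 : G.dist w v ≤ r.length := dist_le r
    have h3 : q.length + r.length = G.dist u v := by
      rw [← Walk.length_append, ← hqr, tpath_length]
    have h4 : G.dist u v ≤ G.dist u w + G.dist w v := hT.isConnected.dist_triangle
    unfold onPath; omega

lemma onPath_left {u v : V} : onPath G u v u := by simp [onPath]

lemma onPath_right {u v : V} : onPath G u v v := by simp [onPath]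

lemma onPath_symm {u v w : V} (h : onPath G u v w) : onPath G v u w := by
  unfold onPath at h ⊢
  have e1 : G.dist v w = G.dist w v := SimpleGraph.dist_comm
  have e2 : G.dist w u = G.dist u w := SimpleGraph.dist_comm
  have e3 : G.dist v u = G.dist u v := SimpleGraph.dist_comm
  omega

lemma onPath_self (hconn : G.Connected) {u w : V} (h : onPath G u u w) : w = u := by
  unfold onPath at h
  rw [dist_self] at h
  have h0 : G.dist u w = 0 := by omega
  exact ((hconn.dist_eq_zero_iff).1 h0).symm

lemma onPath_trans (hconn : G.Connected) {u v w r : V}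
    (h1 : onPath G u v w) (h2 : onPath G u w r) : onPath G u v r := by
  unfold onPath at h1 h2 ⊢
  have t1 : G.dist r v ≤ G.dist r w + G.dist w v := hconn.dist_triangle
  have t2 : G.dist u v ≤ G.dist u r + G.dist r v := hconn.dist_triangle
  omega

lemma onPath_trans' (hconn : G.Connected) {x y c d : V}
    (h1 : onPath G x y c) (h2 : onPath G c y d) : onPath G x y d := by
  unfold onPath at h1 h2 ⊢
  have t1 : G.dist x d ≤ G.dist x c + G.dist c d := hconn.dist_triangle
  have t2 : G.dist x y ≤ G.dist x d + G.dist d y := hconn.dist_triangle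
  omega

lemma support_subset_of_walk (hT : G.IsTree) {u v : V} (W : G.Walk u v) :
    (tpath hT u v).support ⊆ W.support := by
  classical
  rw [← tpath_unique hT _ W.bypass_isPath]
  exact W.support_bypass_subset

lemma onPath_or (hT : G.IsTree) {u w r : V} (h : onPath G u w r) (v : V) :
    onPath G u v r ∨ onPath G v w r := by
  have hm : r ∈ ((tpath hT u v).append (tpath hT v w)).support :=
    support_subset_of_walk hT _ ((onPath_iff hT).1 h)
  rw [Walk.mem_support_append_iff] at hm
  exact hm.imp (fun h' => (onPath_iff hT).2 h') (fun h' => (onPath_iff hT).2 h')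

lemma median (hT : G.IsTree) (x y z : V) :
    ∃ m, onPath G x y m ∧ onPath G x z m ∧ onPath G y z m := by
  classical
  have hconn := hT.isConnected
  set F : Finset V := (tpath hT x y).support.toFinset ∩ (tpath hT x z).support.toFinset with hF
  have hxF : x ∈ F := by
    simp only [hF, Finset.mem_inter, List.mem_toFinset]
    exact ⟨Walk.start_mem_support _, Walk.start_mem_support _⟩
  obtain ⟨c, hcF, hcmax⟩ := F.exists_max_image (fun a => G.dist x a) ⟨x, hxF⟩
  have hc1 : c ∈ (tpath hT x y).support := by
    rw [hF, Finset.mem_inter, List.mem_toFinset, List.mem_toFinset] at hcF; exact hcF.1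
  have hc2 : c ∈ (tpath hT x z).support := by
    rw [hF, Finset.mem_inter, List.mem_toFinset, List.mem_toFinset] at hcF; exact hcF.2
  have hoxy : onPath G x y c := (onPath_iff hT).2 hc1
  have hoxz : onPath G x z c := (onPath_iff hT).2 hc2
  refine ⟨c, hoxy, hoxz, ?_⟩
  set q2 : G.Walk c y := (tpath hT x y).dropUntil c hc1 with hq2
  set q2' : G.Walk c z := (tpath hT x z).dropUntil c hc2 with hq2'
  have hq2p : q2.IsPath := (tpath_isPath hT x y).dropUntil hc1
  have hq2'p : q2'.IsPath := (tpath_isPath hT x z).dropUntil hc2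
  have hcommon : ∀ d, d ∈ q2.support → d ∈ q2'.support → d = c := by
    intro d hd hd'
    have hdP1 : d ∈ (tpath hT x y).support := (tpath hT x y).support_dropUntil_subset hc1 hd
    have hdP2 : d ∈ (tpath hT x z).support := (tpath hT x z).support_dropUntil_subset hc2 hd'
    have h1 : onPath G x y d := (onPath_iff hT).2 hdP1
    have h3 : onPath G c y d := by
      have : d ∈ (tpath hT c y).support := by
        rw [← tpath_unique hT q2 hq2p]; exact hd
      exact (onPath_iff hT).2 this
    have hdF : d ∈ F := by
      rw [hF, Finset.mem_inter, List.mem_toFinset, List.mem_toFinset]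
      exact ⟨hdP1, hdP2⟩
    have hmax := hcmax d hdF
    have hcd0 : G.dist c d = 0 := by
      unfold onPath at h1 h3 hoxy
      have t1 : G.dist x d ≤ G.dist x c + G.dist c d := hconn.dist_triangle
      omega
    exact ((hconn.dist_eq_zero_iff).1 hcd0).symm
  have hWp : (q2.reverse.append q2').IsPath := by
    rw [Walk.isPath_def, Walk.support_append, Walk.support_reverse]
    rw [List.nodup_append]
    have hnd2 : q2.support.Nodup := hq2p.support_nodup
    have hnd2' : q2'.support.Nodup := hq2'p.support_nodup
    have hcons : q2'.support = c :: q2'.support.tail := Walk.support_eq_cons q2'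
    have hcnotin : c ∉ q2'.support.tail := by
      have := hnd2'
      rw [hcons] at this
      exact (List.nodup_cons.mp this).1
    refine ⟨List.nodup_reverse.mpr hnd2, ?_, ?_⟩
    · have := hnd2'
      rw [hcons] at this
      exact (List.nodup_cons.mp this).2
    · intro a ha b ha' hab
      subst hab
      have ha2 : a ∈ q2.support := List.mem_reverse.mp ha
      have ha2' : a ∈ q2'.support := by rw [hcons]; exact List.mem_cons_of_mem _ ha'
      have := hcommon a ha2 ha2'
      subst this
      exact hcnotin ha'
  have hW : q2.reverse.append q2' = tpath hT y z := tpath_unique hT _ hWp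
  have hcW : c ∈ (tpath hT y z).support := by
    rw [← hW, Walk.mem_support_append_iff]
    left
    rw [Walk.support_reverse, List.mem_reverse]
    exact Walk.start_mem_support _
  exact (onPath_iff hT).2 hcW

/-- Geodesic convexity of a set of vertices. -/
def TConv (G : SimpleGraph V) (A : Set V) : Prop :=
  ∀ x ∈ A, ∀ y ∈ A, ∀ m, onPath G x y m → m ∈ A

lemma helly3 (hT : G.IsTree) {A B C : Set V} (hA : TConv G A) (hB : TConv G B)
    (hC : TConv G C) (hab : (A ∩ B).Nonempty) (hac : (A ∩ C).Nonempty)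
    (hbc : (B ∩ C).Nonempty) : ∃ p, p ∈ A ∧ p ∈ B ∧ p ∈ C := by
  obtain ⟨c', hc'A, hc'B⟩ := hab
  obtain ⟨b', hb'A, hb'C⟩ := hac
  obtain ⟨a', ha'B, ha'C⟩ := hbc
  obtain ⟨m, m1, m2, m3⟩ := median hT b' c' a'
  exact ⟨m, hA b' hb'A c' hc'A m m1, hB c' hc'B a' ha'B m m3, hC b' hb'C a' ha'C m m2⟩

lemma helly_list (hT : G.IsTree) :
    ∀ (n : ℕ) (l : List (Set V)), l.length ≤ n → l ≠ [] →
      (∀ A ∈ l, TConv G A) → (∀ A ∈ l, ∀ B ∈ l, (A ∩ B).Nonempty) →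
      ∃ r, ∀ A ∈ l, r ∈ A := by
  intro n
  induction n with
  | zero =>
    intro l hl hne _ _
    cases l with
    | nil => exact absurd rfl hne
    | cons a t => simp at hl
  | succ n IH =>
    intro l hl hne hconv hpair
    match l with
    | [A] =>
      obtain ⟨r, hr, _⟩ := hpair A (by simp) A (by simp)
      exact ⟨r, by intro B hB; rw [List.mem_singleton] at hB; subst hB; exact hr⟩
    | A :: B :: t =>
      have hAl : A ∈ A :: B :: t := by simp
      have hBl : B ∈ A :: B :: t := by simp
      have htl : ∀ C ∈ t, C ∈ A :: B :: t := fun C hC => by simp [hC]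
      obtain ⟨r, hr⟩ := IH ((A ∩ B) :: t) (by simp at hl ⊢; omega) (by simp)
        (by
          intro X hX
          rcases List.mem_cons.mp hX with rfl | hX'
          · intro x hx y hy m hm
            exact ⟨hconv A hAl x hx.1 y hy.1 m hm, hconv B hBl x hx.2 y hy.2 m hm⟩
          · exact hconv X (htl X hX'))
        (by
          intro X hX Y hY
          rcases List.mem_cons.mp hX with rfl | hX' <;>
            rcases List.mem_cons.mp hY with rfl | hY'
          · obtain ⟨p, hp⟩ := hpair A hAl B hBl
            exact ⟨p, hp, hp⟩
          · obtain ⟨p, h1, h2, h3⟩ := helly3 hT (hconv A hAl) (hconv B hBl)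
              (hconv Y (htl Y hY')) (hpair A hAl B hBl) (hpair A hAl Y (htl Y hY'))
              (hpair B hBl Y (htl Y hY'))
            exact ⟨p, ⟨h1, h2⟩, h3⟩
          · obtain ⟨p, h1, h2, h3⟩ := helly3 hT (hconv A hAl) (hconv B hBl)
              (hconv X (htl X hX')) (hpair A hAl B hBl) (hpair A hAl X (htl X hX'))
              (hpair B hBl X (htl X hX'))
            exact ⟨p, h3, h1, h2⟩
          · exact hpair X (htl X hX') Y (htl Y hY'))
      refine ⟨r, ?_⟩
      intro X hX
      have hrAB : r ∈ A ∩ B := hr (A ∩ B) (by simp)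
      rcases List.mem_cons.mp hX with rfl | hX'
      · exact hrAB.1
      rcases List.mem_cons.mp hX' with rfl | hX''
      · exact hrAB.2
      · exact hr X (by simp [hX''])

end TreeHubAux

section Part2

open TreeHubAux

namespace TreeHubAux

variable {V : Type*} {G : SimpleGraph V}

/-- The specification of an optimal hierarchical hub labeling on a convex finite set. -/
def Spec [DecidableEq V] (G : SimpleGraph V) (C : Finset V) (HC : V → Set V)
    (LC : List V) : Prop :=
  (∀ u ∈ C, ∀ v ∈ C, ∃ w, w ∈ C ∧ w ∈ HC u ∧ w ∈ HC v ∧ onPath G u v w) ∧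
  (∀ u ∈ C, HC u ⊆ ↑C) ∧
  LC.Nodup ∧
  (∀ v : V, v ∈ LC ↔ v ∈ C) ∧
  (∀ u ∈ C, ∀ w ∈ HC u, LC.idxOf w ≤ LC.idxOf u) ∧
  (∀ H' : V → Set V,
    (∀ u ∈ C, ∀ v ∈ C, ∃ w, w ∈ C ∧ w ∈ H' u ∧ w ∈ H' v ∧ onPath G u v w) →
    ∑ u ∈ C, (HC u).ncard ≤ ∑ u ∈ C, (H' u ∩ ↑C).ncard)

/-- The equivalence class ("branch at `r`") of `u` in `S \ {r}`. -/
noncomputable def clS (G : SimpleGraph V) [DecidableEq V] (S : Finset V) (r u : V) :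
    Finset V :=
  @Finset.filter V (fun v => ¬ onPath G u v r) (Classical.decPred _) (S.erase r)

variable [DecidableEq V]

lemma mem_clS {S : Finset V} {r u v : V} :
    v ∈ clS G S r u ↔ v ∈ S ∧ v ≠ r ∧ ¬ onPath G u v r := by
  simp only [clS, Finset.mem_filter, Finset.mem_erase]
  tauto

lemma clS_subset {S : Finset V} {r u : V} : clS G S r u ⊆ S.erase r := by
  intro v hv
  obtain ⟨h1, h2, _⟩ := mem_clS.mp hv
  exact Finset.mem_erase.mpr ⟨h2, h1⟩

lemma clS_self (hconn : G.Connected) {S : Finset V} {r u : V} (hu : u ∈ S.erase r) :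
    u ∈ clS G S r u := by
  rw [Finset.mem_erase] at hu
  exact mem_clS.mpr ⟨hu.2, hu.1, fun h => hu.1 (onPath_self hconn h).symm⟩

lemma clS_eq (hT : G.IsTree) {S : Finset V} {r u v : V} (hv : v ∈ clS G S r u) :
    clS G S r v = clS G S r u := by
  obtain ⟨hvS, hvr, hnuv⟩ := mem_clS.mp hv
  ext x
  rw [mem_clS, mem_clS]
  constructor
  · rintro ⟨hxS, hxr, hnvx⟩
    refine ⟨hxS, hxr, fun h => ?_⟩
    rcases onPath_or hT h v with h' | h'
    · exact hnuv h'
    · exact hnvx h'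
  · rintro ⟨hxS, hxr, hnux⟩
    refine ⟨hxS, hxr, fun h => ?_⟩
    rcases onPath_or hT h u with h' | h'
    · exact hnuv (onPath_symm h')
    · exact hnux h'

lemma clS_conv (hT : G.IsTree) {S : Finset V}
    (hconv : ∀ u ∈ S, ∀ v ∈ S, ∀ w : V, onPath G u v w → w ∈ S) {r u : V} :
    ∀ x ∈ clS G S r u, ∀ y ∈ clS G S r u, ∀ m, onPath G x y m → m ∈ clS G S r u := by
  intro x hx y hy m hm
  obtain ⟨hxS, hxr, hnux⟩ := mem_clS.mp hx
  obtain ⟨hyS, hyr, hnuy⟩ := mem_clS.mp hy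
  have hmS : m ∈ S := hconv x hxS y hyS m hm
  have hnxy : ¬ onPath G x y r := by
    have hyx : y ∈ clS G S r x := by rw [clS_eq hT hx]; exact hy
    exact (mem_clS.mp hyx).2.2
  have hmr : m ≠ r := fun h => hnxy (h ▸ hm)
  refine mem_clS.mpr ⟨hmS, hmr, fun h => ?_⟩
  rcases onPath_or hT h x with h' | h'
  · exact hnux h'
  · exact hnxy (onPath_trans hT.isConnected hm h')

/-- The set of branches at `r`. -/
noncomputable def classes (G : SimpleGraph V) [DecidableEq V] (S : Finset V) (r : V) :
    Finset (Finset V) :=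
  @Finset.image _ _ (Classical.decEq _) (clS G S r) (S.erase r)

lemma mem_classes {S : Finset V} {r : V} {C : Finset V} :
    C ∈ classes G S r ↔ ∃ u ∈ S.erase r, clS G S r u = C := by
  simp only [classes, Finset.mem_image]

lemma erase_eq_biUnion (hconn : G.Connected) (S : Finset V) (r : V) :
    S.erase r = (classes G S r).biUnion id := by
  ext x
  rw [Finset.mem_biUnion]
  constructor
  · intro hx
    exact ⟨clS G S r x, mem_classes.mpr ⟨x, hx, rfl⟩, clS_self hconn hx⟩
  · rintro ⟨C, hC, hxC⟩
    obtain ⟨u, hu, rfl⟩ := mem_classes.mp hC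
    exact clS_subset hxC

lemma classes_pd (hT : G.IsTree) (S : Finset V) (r : V) :
    (↑(classes G S r) : Set (Finset V)).PairwiseDisjoint id := by
  intro C hC C' hC' hne
  obtain ⟨u, hu, rfl⟩ := mem_classes.mp (Finset.mem_coe.mp hC)
  obtain ⟨u', hu', rfl⟩ := mem_classes.mp (Finset.mem_coe.mp hC')
  simp only [Function.onFun, id_eq]
  rw [Finset.disjoint_left]
  intro x hx hx'
  exact hne (by rw [← clS_eq hT hx, ← clS_eq hT hx'])

lemma sum_classes (hT : G.IsTree) (S : Finset V) (r : V) (F : V → ℕ) :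
    ∑ u ∈ S.erase r, F u = ∑ C ∈ classes G S r, ∑ u ∈ C, F u := by
  conv_lhs => rw [erase_eq_biUnion hT.isConnected S r]
  rw [Finset.sum_biUnion (classes_pd hT S r)]
  simp only [id_eq]

/-- The cost of the candidate labeling rooted at `r`. -/
noncomputable def gcost (G : SimpleGraph V) [DecidableEq V] (S : Finset V)
    (optH : Finset V → V → Set V) (r : V) : ℕ :=
  1 + (S.erase r).card + ∑ C ∈ classes G S r, ∑ u ∈ C, (optH C u).ncard

lemma idx_flatMap {α β : Type*} [DecidableEq β] (f : α → List β) :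
    ∀ (l : List α) (a : α), a ∈ l → ∀ w u : β, w ∈ f a → u ∈ f a →
      (l.flatMap f).Nodup → (f a).idxOf w ≤ (f a).idxOf u →
      (l.flatMap f).idxOf w ≤ (l.flatMap f).idxOf u := by
  intro l
  induction l with
  | nil => simp
  | cons c rest ihl =>
    intro a ha w u hw hu hnd hle
    rw [List.flatMap_cons] at hnd ⊢
    rcases List.mem_cons.mp ha with rfl | ha'
    · rw [List.idxOf_append_of_mem hw, List.idxOf_append_of_mem hu]
      exact hle
    · have hnd' := List.nodup_append.mp hnd
      have hwm : w ∈ rest.flatMap f := List.mem_flatMap.mpr ⟨a, ha', hw⟩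
      have hum : u ∈ rest.flatMap f := List.mem_flatMap.mpr ⟨a, ha', hu⟩
      have hwc : w ∉ f c := fun h => hnd'.2.2 w h w hwm rfl
      have huc : u ∉ f c := fun h => hnd'.2.2 u h u hum rfl
      rw [List.idxOf_append_of_notMem hwc, List.idxOf_append_of_notMem huc]
      exact Nat.add_le_add_left (ihl a ha' w u hw hu hnd'.2.1 hle) _

end TreeHubAux

end Part2

namespace TreeHubAux

variable {V : Type*} {G : SimpleGraph V}

lemma cand [Fintype V] [DecidableEq V] (hT : G.IsTree) {S : Finset V}
    (hconv : ∀ u ∈ S, ∀ v ∈ S, ∀ w : V, onPath G u v w → w ∈ S) {r : V} (hr : r ∈ S)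
    (optH : Finset V → V → Set V) (optL : Finset V → List V)
    (hopt : ∀ C : Finset V, C.card < S.card → C.Nonempty →
      (∀ u ∈ C, ∀ v ∈ C, ∀ w : V, onPath G u v w → w ∈ C) →
      Spec G C (optH C) (optL C)) :
    ∃ (H : V → Set V) (L : List V),
      (∀ u ∈ S, ∀ v ∈ S, ∃ w, w ∈ S ∧ w ∈ H u ∧ w ∈ H v ∧ onPath G u v w) ∧
      (∀ u ∈ S, H u ⊆ ↑S) ∧ L.Nodup ∧ (∀ v : V, v ∈ L ↔ v ∈ S) ∧
      (∀ u ∈ S, ∀ w ∈ H u, L.idxOf w ≤ L.idxOf u) ∧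
      ∑ u ∈ S, (H u).ncard = gcost G S optH r := by
  classical
  have hconn := hT.isConnected
  have hCspec : ∀ C ∈ classes G S r, Spec G C (optH C) (optL C) := by
    intro C hC
    obtain ⟨u0, hu0, rfl⟩ := mem_classes.mp hC
    refine hopt _ ?_ ⟨u0, clS_self hconn hu0⟩ (clS_conv hT hconv)
    calc (clS G S r u0).card ≤ (S.erase r).card := Finset.card_le_card clS_subset
      _ < S.card := Finset.card_erase_lt_of_mem hr
  have hclX : ∀ u ∈ S.erase r, clS G S r u ∈ classes G S r := fun u hu =>
    mem_classes.mpr ⟨u, hu, rfl⟩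
  set H : V → Set V :=
    fun u => if u ∈ S.erase r then insert r (optH (clS G S r u) u) else {r} with hH
  set L : List V := r :: ((classes G S r).toList.flatMap optL) with hL
  have hrH : ∀ x, r ∈ H x := by
    intro x
    simp only [hH]
    split <;> simp
  have hMnodup : ((classes G S r).toList.flatMap optL).Nodup := by
    rw [List.nodup_flatMap]
    constructor
    · intro C hC
      exact (hCspec C (Finset.mem_toList.mp hC)).2.2.1
    · refine List.Pairwise.imp_of_mem ?_ ((classes G S r).nodup_toList)
      intro C C' hC hC' hne
      intro x hx hx'
      have hxC : x ∈ C := ((hCspec C (Finset.mem_toList.mp hC)).2.2.2.1 x).1 hx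
      have hxC' : x ∈ C' := ((hCspec C' (Finset.mem_toList.mp hC')).2.2.2.1 x).1 hx'
      obtain ⟨u0, hu0, rfl⟩ := mem_classes.mp (Finset.mem_toList.mp hC)
      obtain ⟨u1, hu1, rfl⟩ := mem_classes.mp (Finset.mem_toList.mp hC')
      exact hne (by rw [← clS_eq hT hxC, ← clS_eq hT hxC'])
  refine ⟨H, L, ?_, ?_, ?_, ?_, ?_, ?_⟩
  · -- hub property
    intro u hu v hv
    by_cases huT : u ∈ S.erase r
    · by_cases hvT : v ∈ S.erase r
      · by_cases hvc : v ∈ clS G S r u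
        · have hCs := hCspec _ (hclX u huT)
          have huc : u ∈ clS G S r u := clS_self hconn huT
          obtain ⟨w, hwC, hw1, hw2, hw3⟩ := hCs.1 u huc v hvc
          refine ⟨w, (Finset.mem_erase.mp (clS_subset hwC)).2, ?_, ?_, hw3⟩
          · simp only [hH, if_pos huT]
            exact Set.mem_insert_of_mem _ hw1
          · have he : clS G S r v = clS G S r u := clS_eq hT hvc
            simp only [hH, if_pos hvT, he]
            exact Set.mem_insert_of_mem _ hw2
        · have hor : onPath G u v r := by
            by_contra hcon
            exact hvc (mem_clS.mpr ⟨(Finset.mem_erase.mp hvT).2,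
              (Finset.mem_erase.mp hvT).1, hcon⟩)
          exact ⟨r, hr, hrH u, hrH v, hor⟩
      · have hveq : v = r := by
          by_contra h
          exact hvT (Finset.mem_erase.mpr ⟨h, hv⟩)
        subst hveq
        exact ⟨v, hv, hrH u, hrH v, onPath_right⟩
    · have hueq : u = r := by
        by_contra h
        exact huT (Finset.mem_erase.mpr ⟨h, hu⟩)
      subst hueq
      exact ⟨u, hu, hrH u, hrH v, onPath_left⟩
  · -- subset
    intro u hu x hx
    simp only [hH] at hx
    split_ifs at hx with h
    · rcases Set.mem_insert_iff.mp hx with rfl | hx'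
      · exact Finset.mem_coe.mpr hr
      · have hxC : x ∈ clS G S r u :=
          Finset.mem_coe.mp ((hCspec _ (hclX u h)).2.1 u (clS_self hconn h) hx')
        exact Finset.mem_coe.mpr (Finset.mem_of_mem_erase (clS_subset hxC))
    · rw [Set.mem_singleton_iff] at hx
      subst hx
      exact Finset.mem_coe.mpr hr
  · -- nodup
    rw [hL]
    refine List.nodup_cons.mpr ⟨?_, hMnodup⟩
    intro hrm
    obtain ⟨C, hC, hrC⟩ := List.mem_flatMap.mp hrm
    have h1 : r ∈ C := ((hCspec C (Finset.mem_toList.mp hC)).2.2.2.1 r).1 hrC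
    obtain ⟨u0, hu0, rfl⟩ := mem_classes.mp (Finset.mem_toList.mp hC)
    exact (Finset.mem_erase.mp (clS_subset h1)).1 rfl
  · -- membership
    intro v
    rw [hL, List.mem_cons]
    constructor
    · rintro (rfl | hv)
      · exact hr
      · obtain ⟨C, hC, hvC⟩ := List.mem_flatMap.mp hv
        have h1 : v ∈ C := ((hCspec C (Finset.mem_toList.mp hC)).2.2.2.1 v).1 hvC
        obtain ⟨u0, hu0, rfl⟩ := mem_classes.mp (Finset.mem_toList.mp hC)
        exact Finset.mem_of_mem_erase (clS_subset h1)
    · intro hv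
      by_cases hvr : v = r
      · exact Or.inl hvr
      · right
        have hvT : v ∈ S.erase r := Finset.mem_erase.mpr ⟨hvr, hv⟩
        refine List.mem_flatMap.mpr ⟨clS G S r v, Finset.mem_toList.mpr (hclX v hvT), ?_⟩
        exact ((hCspec _ (hclX v hvT)).2.2.2.1 v).2 (clS_self hconn hvT)
  · -- rank
    intro u hu w hw
    by_cases huT : u ∈ S.erase r
    · simp only [hH, if_pos huT] at hw
      rcases Set.mem_insert_iff.mp hw with rfl | hw'
      · rw [hL, List.idxOf_cons_self]
        exact Nat.zero_le _
      · have hCs := hCspec _ (hclX u huT)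
        have huc : u ∈ clS G S r u := clS_self hconn huT
        have hwC : w ∈ clS G S r u := Finset.mem_coe.mp (hCs.2.1 u huc hw')
        have hwr : w ≠ r := (Finset.mem_erase.mp (clS_subset hwC)).1
        have hur : u ≠ r := (Finset.mem_erase.mp huT).1
        rw [hL, List.idxOf_cons_ne _ (Ne.symm hwr), List.idxOf_cons_ne _ (Ne.symm hur)]
        apply Nat.succ_le_succ
        exact idx_flatMap optL (classes G S r).toList (clS G S r u)
          (Finset.mem_toList.mpr (hclX u huT)) w u
          ((hCs.2.2.2.1 w).2 hwC) ((hCs.2.2.2.1 u).2 huc) hMnodup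
          (hCs.2.2.2.2.1 u huc w hw')
    · have hueq : u = r := by
        by_contra h
        exact huT (Finset.mem_erase.mpr ⟨h, hu⟩)
      subst hueq
      simp only [hH, if_neg huT, Set.mem_singleton_iff] at hw
      subst hw
      exact le_refl _
  · -- cost
    rw [← Finset.add_sum_erase S _ hr]
    have h1 : (H r).ncard = 1 := by
      simp only [hH, if_neg (Finset.notMem_erase r S)]
      exact Set.ncard_singleton r
    have h2 : ∀ u ∈ S.erase r, (H u).ncard = (optH (clS G S r u) u).ncard + 1 := by
      intro u hu
      have hCs := hCspec _ (hclX u hu)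
      have hrnot : r ∉ optH (clS G S r u) u := by
        intro hrin
        have hrc : r ∈ clS G S r u :=
          Finset.mem_coe.mp (hCs.2.1 u (clS_self hconn hu) hrin)
        exact (Finset.mem_erase.mp (clS_subset hrc)).1 rfl
      simp only [hH, if_pos hu]
      exact Set.ncard_insert_of_notMem hrnot (Set.toFinite _)
    have h3 : ∑ u ∈ S.erase r, (H u).ncard
        = (∑ u ∈ S.erase r, (optH (clS G S r u) u).ncard) + (S.erase r).card := by
      rw [Finset.sum_congr rfl h2, Finset.sum_add_distrib, Finset.sum_const,
        smul_eq_mul, mul_one]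
    have h4 : ∑ u ∈ S.erase r, (optH (clS G S r u) u).ncard
        = ∑ C ∈ classes G S r, ∑ u ∈ C, (optH C u).ncard := by
      rw [sum_classes hT S r (fun u => (optH (clS G S r u) u).ncard)]
      refine Finset.sum_congr rfl ?_
      intro C hC
      refine Finset.sum_congr rfl ?_
      intro u hu
      obtain ⟨u0, hu0, rfl⟩ := mem_classes.mp hC
      rw [clS_eq hT hu]
    rw [h1, h3, h4]
    unfold gcost
    omega

end TreeHubAux

namespace TreeHubAux

variable {V : Type*} {G : SimpleGraph V}

lemma lb [Fintype V] [DecidableEq V] (hT : G.IsTree) {S : Finset V} (hS : S.Nonempty)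
    (hconv : ∀ u ∈ S, ∀ v ∈ S, ∀ w : V, onPath G u v w → w ∈ S)
    (optH : Finset V → V → Set V) (optL : Finset V → List V)
    (hopt : ∀ C : Finset V, C.card < S.card → C.Nonempty →
      (∀ u ∈ C, ∀ v ∈ C, ∀ w : V, onPath G u v w → w ∈ C) →
      Spec G C (optH C) (optL C))
    (H' : V → Set V)
    (hH' : ∀ u ∈ S, ∀ v ∈ S, ∃ w, w ∈ S ∧ w ∈ H' u ∧ w ∈ H' v ∧ onPath G u v w) :
    ∃ r ∈ S, gcost G S optH r ≤ ∑ u ∈ S, (H' u ∩ ↑S).ncard := by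
  classical
  have hconn := hT.isConnected
  set A : V → Set V := fun u => {x | ∃ w, w ∈ H' u ∧ w ∈ S ∧ onPath G u w x} with hA
  have hAconv : ∀ u ∈ S, TConv G (A u) := by
    intro u hu x hx y hy m hm
    simp only [hA, Set.mem_setOf_eq] at hx hy ⊢
    obtain ⟨w1, hw1H, hw1S, hw1p⟩ := hx
    obtain ⟨w2, hw2H, hw2S, hw2p⟩ := hy
    rcases onPath_or hT hm u with h' | h'
    · exact ⟨w1, hw1H, hw1S, onPath_trans hconn hw1p (onPath_symm h')⟩
    · exact ⟨w2, hw2H, hw2S, onPath_trans hconn hw2p h'⟩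
  obtain ⟨u0, hu0⟩ := hS
  set l : List (Set V) := S.toList.map A with hl
  have hlne : l ≠ [] := by
    rw [hl]
    intro h
    rw [List.map_eq_nil_iff, Finset.toList_eq_nil] at h
    exact Finset.notMem_empty u0 (h ▸ hu0)
  have hconvl : ∀ B ∈ l, TConv G B := by
    intro B hB
    obtain ⟨u, hu, rfl⟩ := List.mem_map.mp hB
    exact hAconv u (Finset.mem_toList.mp hu)
  have hpairl : ∀ B ∈ l, ∀ B' ∈ l, (B ∩ B').Nonempty := by
    intro B hB B' hB'
    obtain ⟨u, hu, rfl⟩ := List.mem_map.mp hB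
    obtain ⟨v, hv, rfl⟩ := List.mem_map.mp hB'
    obtain ⟨w, hwS, hwu, hwv, hwp⟩ := hH' u (Finset.mem_toList.mp hu) v (Finset.mem_toList.mp hv)
    refine ⟨w, ?_, ?_⟩ <;> simp only [hA, Set.mem_setOf_eq]
    · exact ⟨w, hwu, hwS, onPath_right⟩
    · exact ⟨w, hwv, hwS, onPath_right⟩
  obtain ⟨r, hrall⟩ := helly_list hT l.length l le_rfl hlne hconvl hpairl
  have hgood : ∀ u ∈ S, ∃ w, w ∈ H' u ∧ w ∈ S ∧ onPath G u w r := by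
    intro u hu
    have hrA : r ∈ A u := hrall (A u) (by
      rw [hl]
      exact List.mem_map.mpr ⟨u, Finset.mem_toList.mpr hu, rfl⟩)
    simpa only [hA, Set.mem_setOf_eq] using hrA
  have hrS : r ∈ S := by
    obtain ⟨w, _, hwS, hp⟩ := hgood u0 hu0
    exact hconv u0 hu0 w hwS r hp
  refine ⟨r, hrS, ?_⟩
  have hCspec : ∀ C ∈ classes G S r, Spec G C (optH C) (optL C) := by
    intro C hC
    obtain ⟨w0, hw0, rfl⟩ := mem_classes.mp hC
    refine hopt _ ?_ ⟨w0, clS_self hconn hw0⟩ (clS_conv hT hconv)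
    calc (clS G S r w0).card ≤ (S.erase r).card := Finset.card_le_card clS_subset
      _ < S.card := Finset.card_erase_lt_of_mem hrS
  have hr1 : 1 ≤ (H' r ∩ ↑S).ncard := by
    obtain ⟨w, hwS, hw1, _, hwp⟩ := hH' r hrS r hrS
    have hwr : w = r := onPath_self hconn hwp
    subst hwr
    exact (Set.ncard_pos (Set.toFinite _)).mpr ⟨w, hw1, Finset.mem_coe.mpr hwS⟩
  have hu_bound : ∀ u ∈ S.erase r,
      (H' u ∩ ↑(clS G S r u)).ncard + 1 ≤ (H' u ∩ ↑S).ncard := by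
    intro u hu
    obtain ⟨w, hwH, hwS, hwp⟩ := hgood u (Finset.mem_of_mem_erase hu)
    have hwnot : w ∉ (H' u ∩ ↑(clS G S r u)) := by
      rintro ⟨-, hwc⟩
      exact (mem_clS.mp (Finset.mem_coe.mp hwc)).2.2 hwp
    have hsub : insert w (H' u ∩ ↑(clS G S r u)) ⊆ H' u ∩ ↑S := by
      intro x hx
      rcases Set.mem_insert_iff.mp hx with rfl | ⟨hx1, hx2⟩
      · exact ⟨hwH, Finset.mem_coe.mpr hwS⟩
      · exact ⟨hx1, Finset.mem_coe.mpr
          (Finset.mem_of_mem_erase (clS_subset (Finset.mem_coe.mp hx2)))⟩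
    calc (H' u ∩ ↑(clS G S r u)).ncard + 1
        = (insert w (H' u ∩ ↑(clS G S r u))).ncard :=
          (Set.ncard_insert_of_notMem hwnot (Set.toFinite _)).symm
      _ ≤ (H' u ∩ ↑S).ncard := Set.ncard_le_ncard hsub (Set.toFinite _)
  have hclass_bound : ∀ C ∈ classes G S r,
      ∑ u ∈ C, (optH C u).ncard ≤ ∑ u ∈ C, (H' u ∩ ↑C).ncard := by
    intro C hC
    have hCs := hCspec C hC
    have hCconv : ∀ x ∈ C, ∀ y ∈ C, ∀ m, onPath G x y m → m ∈ C := by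
      obtain ⟨w0, hw0, rfl⟩ := mem_classes.mp hC
      exact clS_conv hT hconv
    have hCS : ∀ x ∈ C, x ∈ S := by
      obtain ⟨w0, hw0, rfl⟩ := mem_classes.mp hC
      exact fun x hx => Finset.mem_of_mem_erase (clS_subset hx)
    refine hCs.2.2.2.2.2 H' ?_
    intro a ha b hb
    obtain ⟨w, hwS, hw1, hw2, hwp⟩ := hH' a (hCS a ha) b (hCS b hb)
    exact ⟨w, hCconv a ha b hb w hwp, hw1, hw2, hwp⟩
  rw [← Finset.add_sum_erase S _ hrS]
  have hsum1 : ∑ u ∈ S.erase r, ((H' u ∩ ↑(clS G S r u)).ncard + 1)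
      ≤ ∑ u ∈ S.erase r, (H' u ∩ ↑S).ncard := Finset.sum_le_sum hu_bound
  have hsum2 : ∑ u ∈ S.erase r, ((H' u ∩ ↑(clS G S r u)).ncard + 1)
      = (∑ u ∈ S.erase r, (H' u ∩ ↑(clS G S r u)).ncard) + (S.erase r).card := by
    rw [Finset.sum_add_distrib, Finset.sum_const, smul_eq_mul, mul_one]
  have hsum3 : ∑ u ∈ S.erase r, (H' u ∩ ↑(clS G S r u)).ncard
      = ∑ C ∈ classes G S r, ∑ u ∈ C, (H' u ∩ ↑C).ncard := by
    rw [sum_classes hT S r (fun u => (H' u ∩ ↑(clS G S r u)).ncard)]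
    refine Finset.sum_congr rfl ?_
    intro C hC
    refine Finset.sum_congr rfl ?_
    intro u hu
    obtain ⟨u1, hu1, rfl⟩ := mem_classes.mp hC
    rw [clS_eq hT hu]
  have hsum4 : ∑ C ∈ classes G S r, ∑ u ∈ C, (optH C u).ncard
      ≤ ∑ C ∈ classes G S r, ∑ u ∈ C, (H' u ∩ ↑C).ncard :=
    Finset.sum_le_sum hclass_bound
  unfold gcost
  omega

lemma key [Fintype V] [DecidableEq V] (hT : G.IsTree) :
    ∀ (n : ℕ) (S : Finset V), S.Nonempty →
      (∀ u ∈ S, ∀ v ∈ S, ∀ w : V, onPath G u v w → w ∈ S) → S.card ≤ n →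
      ∃ (H : V → Set V) (L : List V), Spec G S H L := by
  intro n
  induction n with
  | zero =>
    intro S hS _ hcard
    have := Finset.card_pos.mpr hS
    omega
  | succ n IH =>
    intro S hS hconv hcard
    have optex : ∀ C : Finset V, ∃ (HC : V → Set V) (LC : List V),
        (C.card < S.card → C.Nonempty →
          (∀ u ∈ C, ∀ v ∈ C, ∀ w : V, onPath G u v w → w ∈ C) → Spec G C HC LC) := by
      intro C
      by_cases h : C.card < S.card ∧ C.Nonempty ∧
          (∀ u ∈ C, ∀ v ∈ C, ∀ w : V, onPath G u v w → w ∈ C)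
      · obtain ⟨HC, LC, hspec⟩ := IH C h.2.1 h.2.2 (by omega)
        exact ⟨HC, LC, fun _ _ _ => hspec⟩
      · exact ⟨fun _ => ∅, [], fun h1 h2 h3 => absurd ⟨h1, h2, h3⟩ h⟩
    choose optH optL hopt using optex
    obtain ⟨r0, hr0, hr0min⟩ := S.exists_min_image (gcost G S optH) hS
    obtain ⟨H, L, h1, h2, h3, h4, h5, hcost⟩ :=
      cand hT hconv hr0 optH optL (fun C a b c => hopt C a b c)
    refine ⟨H, L, h1, h2, h3, h4, h5, ?_⟩
    intro H' hH'
    obtain ⟨r, hrS, hle⟩ := lb hT hS hconv optH optL (fun C a b c => hopt C a b c) H' hH'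
    calc ∑ u ∈ S, (H u).ncard = gcost G S optH r0 := hcost
      _ ≤ gcost G S optH r := hr0min r hrS
      _ ≤ _ := hle

end TreeHubAux

theorem exists_hierarchical_l1_optimal {V : Type*} [Fintype V]
    (G : SimpleGraph V) (hT : G.IsTree) :
    ∃ H : V → Set V, IsHubLabeling G H ∧ IsHierarchical H ∧
      ∀ H' : V → Set V, IsHubLabeling G H' →
        ∑ u : V, (H u).ncard ≤ ∑ u : V, (H' u).ncard := by
  classical
  obtain ⟨v0⟩ := hT.isConnected.nonempty
  obtain ⟨H, L, h1, h2, h3, h4, h5, h6⟩ := TreeHubAux.key hT (Fintype.card V) Finset.univ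
    ⟨v0, Finset.mem_univ v0⟩ (fun _ _ _ _ w _ => Finset.mem_univ w)
    (le_of_eq Finset.card_univ)
  refine ⟨H, ?_, ?_, ?_⟩
  · intro u v
    obtain ⟨w, _, hw1, hw2, hw3⟩ := h1 u (Finset.mem_univ u) v (Finset.mem_univ v)
    exact ⟨w, hw1, hw2, hw3⟩
  · refine ⟨fun v => List.idxOf v L, ?_, ?_⟩
    · intro a b hab
      exact (List.idxOf_inj ((h4 a).mpr (Finset.mem_univ a))).mp hab
    · intro u w hw
      exact h5 u (Finset.mem_univ u) w hw
  · intro H' hH'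
    have hfin := h6 H' (fun u _ v _ => by
      obtain ⟨w, hw1, hw2, hw3⟩ := hH' u v
      exact ⟨w, Finset.mem_univ w, hw1, hw2, hw3⟩)
    simpa only [Finset.coe_univ, Set.inter_univ] using hfin
end

section
/- For every finite tree T there exists a hub labeling H of T that is hierarchical and minimizes the ℓ∞-cost max_{u ∈ V} |H_u| over all hub labelings of T. -/
set_option linter.unusedSectionVars false

open SimpleGraph

namespace HubProof

variable {V : Type*} [DecidableEq V] {G : SimpleGraph V}

noncomputable def pth (hT : G.IsTree) (u v : V) : G.Walk u v :=
  (hT.existsUnique_path u v).exists.choose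

lemma pth_isPath (hT : G.IsTree) (u v : V) : (pth hT u v).IsPath :=
  (hT.existsUnique_path u v).exists.choose_spec

lemma pth_unique (hT : G.IsTree) {u v : V} (p : G.Walk u v) (hp : p.IsPath) :
    p = pth hT u v := by
  obtain ⟨q, _, hu⟩ := hT.existsUnique_path u v
  rw [hu p hp, hu _ (pth_isPath hT u v)]

lemma isPath_of_length_eq_dist {u v : V} (q : G.Walk u v) (h : q.length = G.dist u v) :
    q.IsPath := by
  have h1 : q.length ≤ q.bypass.length := h ▸ SimpleGraph.dist_le q.bypass
  have h2 := q.bypass_eq_self_of_length_le h1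
  rw [← h2]; exact q.bypass_isPath

lemma pth_length (hT : G.IsTree) (u v : V) : (pth hT u v).length = G.dist u v := by
  have hr : G.Reachable u v := hT.isConnected u v
  obtain ⟨w, hw⟩ := hr.exists_walk_length_eq_dist
  have hply : (pth hT u v).length ≤ w.bypass.length := by
    rw [← pth_unique hT w.bypass w.bypass_isPath]
  have : w.bypass.length ≤ G.dist u v := hw ▸ w.length_bypass_le
  exact le_antisymm (le_trans hply this) (SimpleGraph.dist_le _)

lemma onPath_iff (hT : G.IsTree) {u v w : V} :
    onPath G u v w ↔ w ∈ (pth hT u v).support := by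
  constructor
  · intro h
    have hlen : ((pth hT u w).append (pth hT w v)).length = G.dist u v := by
      rw [SimpleGraph.Walk.length_append, pth_length, pth_length]; exact h
    have hqp : ((pth hT u w).append (pth hT w v)).IsPath :=
      isPath_of_length_eq_dist _ hlen
    rw [← pth_unique hT _ hqp, SimpleGraph.Walk.mem_support_append_iff]
    exact Or.inr (SimpleGraph.Walk.start_mem_support _)
  · intro h
    have h1 : (pth hT u v).takeUntil w h = pth hT u w :=
      pth_unique hT _ ((pth_isPath hT u v).takeUntil h)
    have h2 : (pth hT u v).dropUntil w h = pth hT w v :=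
      pth_unique hT _ ((pth_isPath hT u v).dropUntil h)
    have := congrArg SimpleGraph.Walk.length ((pth hT u v).take_spec h)
    rw [SimpleGraph.Walk.length_append, h1, h2, pth_length, pth_length, pth_length] at this
    exact this

lemma onPath_left (G : SimpleGraph V) (u v : V) : onPath G u v u := by
  simp [onPath, SimpleGraph.dist_self]

lemma onPath_right (G : SimpleGraph V) (u v : V) : onPath G u v v := by
  simp [onPath, SimpleGraph.dist_self]

lemma onPath_symm {u v w : V} (h : onPath G u v w) : onPath G v u w := by
  unfold onPath at *
  have h1 := G.dist_comm (u := v) (v := w)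
  have h2 := G.dist_comm (u := w) (v := u)
  have h3 := G.dist_comm (u := v) (v := u)
  omega

lemma onPath_self_iff (hc : G.Connected) {u w : V} : onPath G u u w ↔ w = u := by
  constructor
  · intro h
    unfold onPath at h
    rw [G.dist_self] at h
    have : G.dist u w = 0 := by omega
    exact (hc.dist_eq_zero_iff.mp this).symm
  · rintro rfl; exact onPath_left G _ _

/-- If `x` is on the path from `a` to `c`, it is on the path from `a` to `b` or from `b` to `c`. -/
lemma onPath_split (hT : G.IsTree) {a b c x : V} (h : onPath G a c x) :
    onPath G a b x ∨ onPath G b c x := by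
  rw [onPath_iff hT] at h
  rw [onPath_iff hT, onPath_iff hT]
  set wk : G.Walk a c := (pth hT a b).append (pth hT b c) with hwk
  have hb : wk.bypass = pth hT a c := pth_unique hT _ wk.bypass_isPath
  rw [← hb] at h
  have := SimpleGraph.Walk.support_bypass_subset wk h
  rw [hwk, SimpleGraph.Walk.mem_support_append_iff] at this
  exact this

/-- Prefix closure: if `x` is on the path `a–b` and `z` on the path `a–x`, then `z` is on `a–b`. -/
lemma onPath_prefix (hT : G.IsTree) {a b x z : V} (hx : onPath G a b x) (hz : onPath G a x z) :
    onPath G a b z := by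
  rw [onPath_iff hT] at hx hz ⊢
  have h1 : (pth hT a b).takeUntil x hx = pth hT a x :=
    pth_unique hT _ ((pth_isPath hT a b).takeUntil hx)
  rw [← h1] at hz
  exact SimpleGraph.Walk.support_takeUntil_subset _ hx hz

lemma onPath_suffix (hT : G.IsTree) {a b x z : V} (hx : onPath G a b x) (hz : onPath G x b z) :
    onPath G a b z :=
  onPath_symm (onPath_prefix hT (onPath_symm hx) (onPath_symm hz))



lemma median_aux (hT : G.IsTree) :
    ∀ n : ℕ, ∀ a b c : V, G.dist a b ≤ n →
      ∃ m, onPath G a b m ∧ onPath G a c m ∧ onPath G b c m := by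
  intro n
  induction n with
  | zero =>
    intro a b c h
    have hab : a = b := hT.isConnected.dist_eq_zero_iff.mp (Nat.le_zero.mp h)
    subst hab
    exact ⟨a, onPath_left G a a, onPath_left G a c, onPath_left G a c⟩
  | succ n IH =>
    intro a b c h
    by_cases hbc : onPath G b c a
    · exact ⟨a, onPath_left G a b, onPath_left G a c, hbc⟩
    · have hab : a ≠ b := by
        rintro rfl
        exact hbc (onPath_left G a c)
      -- the appended walk b → a → c is not a path, so the paths a–b and a–c share
      -- a vertex z ≠ a
      set p := pth hT a b with hp
      set q := pth hT a c with hq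
      have hnp : ¬ (p.reverse.append q).IsPath := by
        intro hpath
        apply hbc
        rw [onPath_iff hT, ← pth_unique hT _ hpath,
          SimpleGraph.Walk.mem_support_append_iff]
        left
        rw [SimpleGraph.Walk.support_reverse, List.mem_reverse]
        exact SimpleGraph.Walk.start_mem_support p
      have hnd : ¬ (p.reverse.support ++ q.support.tail).Nodup := by
        intro hnd
        apply hnp
        rw [SimpleGraph.Walk.isPath_def, SimpleGraph.Walk.support_append]
        exact hnd
      have hnd1 : p.reverse.support.Nodup := ((pth_isPath hT a b).reverse).support_nodup
      have hnd2 : q.support.tail.Nodup :=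
        ((pth_isPath hT a c).support_nodup).sublist (List.tail_sublist _)
      have : ¬ List.Disjoint p.reverse.support q.support.tail := by
        intro hdisj
        exact hnd (List.nodup_append'.mpr ⟨hnd1, hnd2, hdisj⟩)
      rw [List.disjoint_left] at this
      push_neg at this
      obtain ⟨z, hz1, hz2⟩ := this
      have hzp : z ∈ p.support := by
        rw [SimpleGraph.Walk.support_reverse, List.mem_reverse] at hz1; exact hz1
      have hzq : z ∈ q.support := List.mem_of_mem_tail hz2
      have hza : z ≠ a := by
        intro hzeq
        have := (pth_isPath hT a c).support_nodup
        rw [q.support_eq_cons] at this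
        exact (List.nodup_cons.mp this).1 (hzeq ▸ hz2)
      have hzab : onPath G a b z := (onPath_iff hT).mpr hzp
      have hzac : onPath G a c z := (onPath_iff hT).mpr hzq
      have hdaz : G.dist a z ≠ 0 := fun h0 =>
        hza (hT.isConnected.dist_eq_zero_iff.mp h0).symm
      have hlt : G.dist z b ≤ n := by
        have := hzab
        unfold onPath at this
        omega
      obtain ⟨m, h1, h2, h3⟩ := IH z b c hlt
      exact ⟨m, onPath_suffix hT hzab h1, onPath_suffix hT hzac h2, h3⟩

lemma median (hT : G.IsTree) (a b c : V) :
    ∃ m, onPath G a b m ∧ onPath G a c m ∧ onPath G b c m :=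
  median_aux hT (G.dist a b) a b c le_rfl

/-- A subset of a tree is (path-)closed if it contains every vertex on a path
between two of its elements. -/
def ClosedS (G : SimpleGraph V) (A : Set V) : Prop :=
  ∀ u ∈ A, ∀ v ∈ A, ∀ w, onPath G u v w → w ∈ A

lemma ClosedS.inter {A B : Set V} (hA : ClosedS G A) (hB : ClosedS G B) :
    ClosedS G (A ∩ B) := fun u hu v hv w hw =>
  ⟨hA u hu.1 v hv.1 w hw, hB u hu.2 v hv.2 w hw⟩

lemma helly3 (hT : G.IsTree) {A B C : Set V}
    (hA : ClosedS G A) (hB : ClosedS G B) (hC : ClosedS G C)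
    (hAB : ∃ x, x ∈ A ∧ x ∈ B) (hAC : ∃ x, x ∈ A ∧ x ∈ C) (hBC : ∃ x, x ∈ B ∧ x ∈ C) :
    ∃ x, x ∈ A ∧ x ∈ B ∧ x ∈ C := by
  obtain ⟨a', haB, haC⟩ := hBC
  obtain ⟨b', hbA, hbC⟩ := hAC
  obtain ⟨c', hcA, hcB⟩ := hAB
  obtain ⟨m, h1, h2, h3⟩ := median hT a' b' c'
  exact ⟨m, hA b' hbA c' hcA m h3, hB a' haB c' hcB m h2, hC a' haC b' hbC m h1⟩

lemma helly (hT : G.IsTree) (I : Finset V) (hI : I.Nonempty) (f : V → Set V)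
    (hcl : ∀ i ∈ I, ClosedS G (f i))
    (hpair : ∀ i ∈ I, ∀ j ∈ I, ∃ x, x ∈ f i ∧ x ∈ f j) :
    ∃ x, ∀ i ∈ I, x ∈ f i := by
  induction hI using Finset.Nonempty.cons_induction generalizing f with
  | singleton a =>
    obtain ⟨x, hx, -⟩ := hpair a (Finset.mem_singleton_self a) a (Finset.mem_singleton_self a)
    exact ⟨x, by simpa using hx⟩
  | cons a s ha hs IH =>
    have hmem : ∀ i ∈ s, i ∈ Finset.cons a s ha := fun i hi =>
      Finset.mem_cons_of_mem hi
    have hamem : a ∈ Finset.cons a s ha := Finset.mem_cons_self a s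
    obtain ⟨x, hx⟩ := IH (fun b => f b ∩ f a)
      (fun i hi => (hcl i (hmem i hi)).inter (hcl a hamem))
      (fun i hi j hj => by
        obtain ⟨x, hx1, hx2, hx3⟩ := helly3 hT (hcl i (hmem i hi)) (hcl j (hmem j hj))
          (hcl a hamem) (hpair i (hmem i hi) j (hmem j hj))
          (hpair i (hmem i hi) a hamem) (hpair j (hmem j hj) a hamem)
        exact ⟨x, ⟨hx1, hx3⟩, hx2, hx3⟩)
    obtain ⟨b0, hb0⟩ := hs
    refine ⟨x, fun i hi => ?_⟩
    rcases Finset.mem_cons.mp hi with rfl | hi'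
    · exact (hx b0 hb0).2
    · exact (hx i hi').1


/-- A hub labeling relative to a subset `S` of the vertices. -/
def HubOn (G : SimpleGraph V) (S : Finset V) (H : V → Set V) : Prop :=
  ∀ u ∈ S, ∀ v ∈ S, ∃ w, w ∈ H u ∧ w ∈ H v ∧ onPath G u v w

open scoped Classical in
/-- The component of `x` in `S` after removing `r`. -/
noncomputable def compS (G : SimpleGraph V) (S : Finset V) (r x : V) : Finset V :=
  (S.erase r).filter (fun y => ¬ onPath G x y r)

open scoped Classical in
lemma mem_compS {G : SimpleGraph V} {S : Finset V} {r x y : V} :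
    y ∈ compS G S r x ↔ y ∈ S ∧ y ≠ r ∧ ¬ onPath G x y r := by
  simp [compS, Finset.mem_filter, Finset.mem_erase, and_assoc, and_comm, and_left_comm]

lemma compS_self {S : Finset V} (hc : G.Connected) {r x : V} (hx : x ∈ S) (hxr : x ≠ r) :
    x ∈ compS G S r x :=
  mem_compS.mpr ⟨hx, hxr, fun h => hxr ((onPath_self_iff hc).mp h).symm⟩

lemma compS_subset {S : Finset V} {r x : V} : compS G S r x ⊆ S.erase r := fun y hy => by
  obtain ⟨h1, h2, _⟩ := mem_compS.mp hy
  exact Finset.mem_erase.mpr ⟨h2, h1⟩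

lemma compS_ssubset {S : Finset V} {r x : V} (hr : r ∈ S) : compS G S r x ⊂ S := by
  refine (Finset.ssubset_iff_of_subset (compS_subset.trans (S.erase_subset r))).mpr
    ⟨r, hr, fun hmem => ?_⟩
  exact (mem_compS.mp hmem).2.1 rfl

lemma compS_closed (hT : G.IsTree) {S : Finset V} (hS : ClosedS G ↑S) {r x : V} :
    ClosedS G ↑(compS G S r x) := by
  intro u hu v hv w hw
  rw [Finset.mem_coe, mem_compS] at hu hv ⊢
  obtain ⟨huS, hur, hupath⟩ := hu
  obtain ⟨hvS, hvr, hvpath⟩ := hv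
  have hwS : w ∈ S := by
    have := hS u (by exact_mod_cast huS) v (by exact_mod_cast hvS) w hw
    exact_mod_cast this
  have hnot : ¬ onPath G u v r := fun hr => by
    rcases onPath_split hT (b := x) hr with h | h
    · exact hupath (onPath_symm h)
    · exact hvpath h
  have hwr : w ≠ r := fun h => hnot (h ▸ hw)
  refine ⟨hwS, hwr, fun hxw => ?_⟩
  rcases onPath_split hT (b := u) hxw with h | h
  · exact hupath h
  · exact hnot (onPath_prefix hT hw h)

lemma compS_eq (hT : G.IsTree) {S : Finset V} {r x y : V} (hy : y ∈ compS G S r x) :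
    compS G S r y = compS G S r x := by
  obtain ⟨hyS, hyr, hyx⟩ := mem_compS.mp hy
  have hxy : ¬ onPath G y x r := fun h => hyx (onPath_symm h)
  ext z
  rw [mem_compS, mem_compS]
  constructor
  · rintro ⟨h1, h2, h3⟩
    refine ⟨h1, h2, fun hxz => ?_⟩
    rcases onPath_split hT (b := y) hxz with h | h
    · exact hyx h
    · exact h3 h
  · rintro ⟨h1, h2, h3⟩
    refine ⟨h1, h2, fun hyz => ?_⟩
    rcases onPath_split hT (b := x) hyz with h | h
    · exact hxy h
    · exact h3 h

open scoped Classical in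
/-- The recursive labeling built from a separator `r` and recursively chosen labelings `g`. -/
noncomputable def HrDef (G : SimpleGraph V) (S : Finset V) (g : Finset V → V → Set V)
    (r u : V) : Set V :=
  if u = r then {r} else if u ∈ S.erase r then insert r (g (compS G S r u) u) else ∅

lemma HrDef_self {S : Finset V} {g : Finset V → V → Set V} {r : V} :
    HrDef G S g r r = {r} := if_pos rfl

lemma HrDef_of_mem {S : Finset V} {g : Finset V → V → Set V} {r u : V}
    (h : u ∈ S.erase r) : HrDef G S g r u = insert r (g (compS G S r u) u) := by
  rw [HrDef, if_neg (Finset.ne_of_mem_erase h), if_pos h]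

lemma HrDef_r_mem {S : Finset V} {g : Finset V → V → Set V} {r u : V}
    (hu : u ∈ S) (hr : r ∈ S) : r ∈ HrDef G S g r u := by
  by_cases h : u = r
  · subst h; rw [HrDef_self]; exact rfl
  · rw [HrDef_of_mem (Finset.mem_erase.mpr ⟨h, hu⟩)]; exact Set.mem_insert r _

/-- All the properties carried through the induction. -/
def HProps [Fintype V] (G : SimpleGraph V) (C : Finset V) (H : V → Set V) : Prop :=
  HubOn G C H ∧ (∀ u ∈ C, u ∈ H u) ∧ (∀ u ∈ C, H u ⊆ ↑C) ∧
  (∀ u ∈ C, ∀ w ∈ H u, H w ⊆ H u) ∧ (∀ u ∈ C, ∀ w ∈ H u, u ∈ H w → w = u) ∧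
  (∀ H' : V → Set V, HubOn G C H' →
    C.sup (fun u => (H u).ncard) ≤ C.sup (fun u => (H' u).ncard))

variable [Fintype V]

lemma main (hT : G.IsTree) : ∀ S : Finset V, ClosedS G ↑S → ∃ H, HProps G S H := by
  intro S
  induction S using Finset.strongInduction with
  | _ S IH =>
    intro hS
    rcases S.eq_empty_or_nonempty with rfl | hne
    · refine ⟨fun _ => ∅, ?_, ?_, ?_, ?_, ?_, ?_⟩ <;>
        simp [HubOn]
    -- choose recursively optimal labelings for the strictly smaller closed subsets
    have hgex : ∀ C : Finset V, ∃ H, C ⊂ S → ClosedS G ↑C → HProps G C H := by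
      intro C
      by_cases h : C ⊂ S ∧ ClosedS G ↑C
      · obtain ⟨H, hH⟩ := IH C h.1 h.2
        exact ⟨H, fun _ _ => hH⟩
      · exact ⟨fun _ => ∅, fun h1 h2 => absurd ⟨h1, h2⟩ h⟩
    choose g hg using hgex
    -- properties of the labeling associated with an arbitrary separator r ∈ S
    have hprops : ∀ r ∈ S,
        HubOn G S (HrDef G S g r) ∧
        (∀ u ∈ S, u ∈ HrDef G S g r u) ∧
        (∀ u ∈ S, HrDef G S g r u ⊆ ↑S) ∧
        (∀ u ∈ S, ∀ w ∈ HrDef G S g r u, HrDef G S g r w ⊆ HrDef G S g r u) ∧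
        (∀ u ∈ S, ∀ w ∈ HrDef G S g r u, u ∈ HrDef G S g r w → w = u) := by
      intro r hr
      have hgC : ∀ u ∈ S.erase r, HProps G (compS G S r u) (g (compS G S r u)) :=
        fun u _ => hg _ (compS_ssubset hr) (compS_closed hT hS)
      have huC : ∀ u ∈ S.erase r, u ∈ compS G S r u := fun u hu =>
        compS_self hT.isConnected (Finset.mem_of_mem_erase hu) (Finset.ne_of_mem_erase hu)
      have hCsub : ∀ u ∈ S.erase r, ∀ w ∈ g (compS G S r u) u, w ∈ S.erase r := by
        intro u hu w hw
        have := (hgC u hu).2.2.1 u (huC u hu) hw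
        exact compS_subset (by exact_mod_cast this)
      have hCeq : ∀ u ∈ S.erase r, ∀ w ∈ g (compS G S r u) u,
          compS G S r w = compS G S r u := by
        intro u hu w hw
        have := (hgC u hu).2.2.1 u (huC u hu) hw
        exact compS_eq hT (by exact_mod_cast this)
      refine ⟨?_, ?_, ?_, ?_, ?_⟩
      · -- hub property
        intro u hu v hv
        by_cases hpuv : onPath G u v r
        · exact ⟨r, HrDef_r_mem hu hr, HrDef_r_mem hv hr, hpuv⟩
        · have hur : u ≠ r := fun h => by subst h; exact hpuv (onPath_left G u v)
          have hvr : v ≠ r := fun h => by subst h; exact hpuv (onPath_right G u v)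
          have hue : u ∈ S.erase r := Finset.mem_erase.mpr ⟨hur, hu⟩
          have hve : v ∈ S.erase r := Finset.mem_erase.mpr ⟨hvr, hv⟩
          have hvC : v ∈ compS G S r u := mem_compS.mpr ⟨hv, hvr, hpuv⟩
          have hceq : compS G S r v = compS G S r u := compS_eq hT hvC
          obtain ⟨w, hw1, hw2, hw3⟩ := (hgC u hue).1 u (huC u hue) v hvC
          refine ⟨w, ?_, ?_, hw3⟩
          · rw [HrDef_of_mem hue]; exact Set.mem_insert_of_mem _ hw1
          · rw [HrDef_of_mem hve, hceq]; exact Set.mem_insert_of_mem _ hw2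
      · -- self membership
        intro u hu
        by_cases h : u = r
        · subst h; rw [HrDef_self]; exact rfl
        · have hue : u ∈ S.erase r := Finset.mem_erase.mpr ⟨h, hu⟩
          rw [HrDef_of_mem hue]
          exact Set.mem_insert_of_mem _ ((hgC u hue).2.1 u (huC u hue))
      · -- contained in S
        intro u hu
        by_cases h : u = r
        · subst h; rw [HrDef_self]
          intro z hz; rw [Set.mem_singleton_iff] at hz; subst hz; exact_mod_cast hu
        · have hue : u ∈ S.erase r := Finset.mem_erase.mpr ⟨h, hu⟩
          rw [HrDef_of_mem hue]
          intro z hz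
          rcases Set.mem_insert_iff.mp hz with rfl | hz'
          · exact_mod_cast hr
          · exact_mod_cast Finset.mem_of_mem_erase (hCsub u hue z hz')
      · -- nesting
        intro u hu w hw
        by_cases h : u = r
        · subst h; rw [HrDef_self] at hw
          rw [Set.mem_singleton_iff] at hw; subst hw
          exact subset_rfl
        · have hue : u ∈ S.erase r := Finset.mem_erase.mpr ⟨h, hu⟩
          rw [HrDef_of_mem hue] at hw
          rcases Set.mem_insert_iff.mp hw with rfl | hw'
          · rw [HrDef_self]
            intro z hz; rw [Set.mem_singleton_iff] at hz; subst hz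
            exact HrDef_r_mem hu hr
          · have hwe : w ∈ S.erase r := hCsub u hue w hw'
            rw [HrDef_of_mem hue, HrDef_of_mem hwe, hCeq u hue w hw']
            exact Set.insert_subset_insert ((hgC u hue).2.2.2.1 u (huC u hue) w hw')
      · -- antisymmetry
        intro u hu w hw huw
        by_cases h : u = r
        · subst h; rw [HrDef_self] at hw
          exact hw
        · have hue : u ∈ S.erase r := Finset.mem_erase.mpr ⟨h, hu⟩
          rw [HrDef_of_mem hue] at hw
          rcases Set.mem_insert_iff.mp hw with rfl | hw'
          · rw [HrDef_self] at huw
            exact absurd huw h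
          · have hwe : w ∈ S.erase r := hCsub u hue w hw'
            rw [HrDef_of_mem hwe, hCeq u hue w hw'] at huw
            rcases Set.mem_insert_iff.mp huw with rfl | huw'
            · exact absurd rfl h
            · exact (hgC u hue).2.2.2.2.1 u (huC u hue) w hw' huw'
    -- pick the separator minimizing the cost
    obtain ⟨r, hrS, hrmin⟩ := S.exists_min_image
      (fun r => S.sup (fun u => (HrDef G S g r u).ncard)) hne
    obtain ⟨hHub, hSelf, hSub, hNest, hAnti⟩ := hprops r hrS
    refine ⟨HrDef G S g r, hHub, hSelf, hSub, hNest, hAnti, ?_⟩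
    -- optimality
    intro H' hH'
    set c := S.sup (fun u => (H' u).ncard) with hc
    have hmem' : ∀ u ∈ S, u ∈ H' u := by
      intro u hu
      obtain ⟨w, h1, _, h3⟩ := hH' u hu u hu
      rw [onPath_self_iff hT.isConnected] at h3
      exact h3 ▸ h1
    have hc1 : 1 ≤ c := by
      obtain ⟨u0, hu0⟩ := hne
      calc 1 ≤ (H' u0).ncard := by
              rw [Nat.one_le_iff_ne_zero, ← Nat.pos_iff_ne_zero]
              exact (Set.ncard_pos (Set.toFinite _)).mpr ⟨u0, hmem' u0 hu0⟩
        _ ≤ c := Finset.le_sup (f := fun u => (H' u).ncard) hu0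
    -- the spanned subtrees and their common (Helly) vertex
    set Su : V → Set V := fun u => {x | ∃ w, w ∈ H' u ∧ w ∈ (↑S : Set V) ∧ onPath G u w x}
      with hSu
    have hclosed : ∀ u ∈ S, ClosedS G (Su u) := by
      intro u hu x hx y hy z hz
      obtain ⟨wx, hwx1, hwx2, hwx3⟩ := hx
      obtain ⟨wy, hwy1, hwy2, hwy3⟩ := hy
      rcases onPath_split hT (b := u) hz with h | h
      · exact ⟨wx, hwx1, hwx2, onPath_prefix hT hwx3 (onPath_symm h)⟩
      · exact ⟨wy, hwy1, hwy2, onPath_prefix hT hwy3 h⟩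
    have hpairwise : ∀ u ∈ S, ∀ v ∈ S, ∃ x, x ∈ Su u ∧ x ∈ Su v := by
      intro u hu v hv
      obtain ⟨w, h1, h2, h3⟩ := hH' u hu v hv
      have hwS : w ∈ (↑S : Set V) := hS u (by exact_mod_cast hu) v (by exact_mod_cast hv) w h3
      exact ⟨w, ⟨w, h1, hwS, onPath_right G u w⟩, ⟨w, h2, hwS, onPath_right G v w⟩⟩
    obtain ⟨r0, hr0⟩ := helly hT S hne Su hclosed hpairwise
    have hr0S : r0 ∈ S := by
      obtain ⟨u0, hu0⟩ := hne
      obtain ⟨w, hw1, hw2, hw3⟩ := hr0 u0 hu0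
      have := hS u0 (by exact_mod_cast hu0) w hw2 r0 hw3
      exact_mod_cast this
    -- bound the cost of the labeling with separator r0 by c
    have hbound : ∀ u ∈ S, (HrDef G S g r0 u).ncard ≤ c := by
      intro u hu
      by_cases h : u = r0
      · subst h; rw [HrDef_self, Set.ncard_singleton]; exact hc1
      · have hue : u ∈ S.erase r0 := Finset.mem_erase.mpr ⟨h, hu⟩
        set C := compS G S r0 u with hC
        have hgC : HProps G C (g C) := hg _ (compS_ssubset hr0S) (compS_closed hT hS)
        have hCcl : ClosedS G ↑C := compS_closed hT hS
        -- restriction of H' to C is a hub labeling of C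
        have hH1 : HubOn G C (fun v => H' v ∩ ↑C) := by
          intro x hx y hy
          obtain ⟨w, h1, h2, h3⟩ := hH' x (Finset.mem_of_mem_erase (compS_subset hx))
            y (Finset.mem_of_mem_erase (compS_subset hy))
          have hwC : w ∈ (↑C : Set V) :=
            hCcl x (by exact_mod_cast hx) y (by exact_mod_cast hy) w h3
          exact ⟨w, ⟨h1, hwC⟩, ⟨h2, hwC⟩, h3⟩
        -- each restricted label loses at least the escaping hub
        have hstep : ∀ v ∈ C, ((fun v => H' v ∩ ↑C) v).ncard ≤ c - 1 := by
          intro v hv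
          have hvS : v ∈ S := Finset.mem_of_mem_erase (compS_subset hv)
          obtain ⟨w, hw1, hw2, hw3⟩ := hr0 v hvS
          have hwC : w ∉ (↑C : Set V) := by
            intro hwC
            have : r0 ∈ (↑C : Set V) := hCcl v (by exact_mod_cast hv) w hwC r0 hw3
            rw [Finset.mem_coe, mem_compS] at this
            exact this.2.1 rfl
          have hsub1 : H' v ∩ ↑C ⊆ H' v \ {w} := by
            intro z hz
            exact ⟨hz.1, fun hzw => hwC (Set.mem_singleton_iff.mp hzw ▸ hz.2)⟩
          calc (H' v ∩ ↑C).ncard ≤ (H' v \ {w}).ncard :=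
                Set.ncard_le_ncard hsub1 (Set.toFinite _)
            _ = (H' v).ncard - 1 := Set.ncard_diff_singleton_of_mem hw1
            _ ≤ c - 1 := Nat.sub_le_sub_right (Finset.le_sup (f := fun u => (H' u).ncard) hvS) 1
        have huC : u ∈ C := compS_self hT.isConnected hu h
        calc (HrDef G S g r0 u).ncard
            = (insert r0 (g C u)).ncard := by rw [HrDef_of_mem hue]
          _ ≤ (g C u).ncard + 1 := Set.ncard_insert_le _ _
          _ ≤ C.sup (fun v => (g C v).ncard) + 1 := by
              exact Nat.add_le_add_right (Finset.le_sup (f := fun v => (g C v).ncard) huC) 1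
          _ ≤ C.sup (fun v => (H' v ∩ ↑C).ncard) + 1 := by
              exact Nat.add_le_add_right (hgC.2.2.2.2.2 _ hH1) 1
          _ ≤ (c - 1) + 1 := Nat.add_le_add_right (Finset.sup_le hstep) 1
          _ = c := by omega
    calc S.sup (fun u => (HrDef G S g r u).ncard)
        ≤ S.sup (fun u => (HrDef G S g r0 u).ncard) := hrmin r0 hr0S
      _ ≤ c := Finset.sup_le hbound

end HubProof

theorem exists_hierarchical_linfty_optimal {V : Type*} [Fintype V]
    (G : SimpleGraph V) (hT : G.IsTree) :
    ∃ H : V → Set V, IsHubLabeling G H ∧ IsHierarchical H ∧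
      ∀ H' : V → Set V, IsHubLabeling G H' →
        Finset.univ.sup (fun u : V => (H u).ncard) ≤
          Finset.univ.sup (fun u : V => (H' u).ncard) := by
  classical
  obtain ⟨H, hHub, hSelf, hSub, hNest, hAnti, hOpt⟩ :=
    HubProof.main hT Finset.univ (fun u _ v _ w _ => Finset.mem_coe.mpr (Finset.mem_univ w))
  refine ⟨H, ?_, ?_, ?_⟩
  · intro u v
    exact hHub u (Finset.mem_univ u) v (Finset.mem_univ v)
  · -- hierarchical: rank by size of hub set, tie-broken by an equivalence with Fin n
    set n := Fintype.card V with hn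
    set e := Fintype.equivFin V with he
    refine ⟨fun u => (e u : ℕ) + (Finset.univ.filter (fun w => w ∈ H u)).card * n, ?_, ?_⟩
    · intro u v huv
      have h1 : (e u : ℕ) < n := (e u).isLt
      have h2 : (e v : ℕ) < n := (e v).isLt
      have h3 : ((e u : ℕ) + (Finset.univ.filter (fun w => w ∈ H u)).card * n) % n
          = ((e v : ℕ) + (Finset.univ.filter (fun w => w ∈ H v)).card * n) % n := by
        simp only at huv
        rw [huv]
      rw [Nat.add_mul_mod_self_right, Nat.add_mul_mod_self_right,
        Nat.mod_eq_of_lt h1, Nat.mod_eq_of_lt h2] at h3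
      exact e.injective (Fin.ext h3)
    · intro u w hw
      by_cases hwu : w = u
      · subst hwu; exact le_rfl
      · have hsub : (Finset.univ.filter (fun z => z ∈ H w))
            ⊆ (Finset.univ.filter (fun z => z ∈ H u)) := by
          intro z hz
          rw [Finset.mem_filter] at hz ⊢
          exact ⟨hz.1, hNest u (Finset.mem_univ u) w hw hz.2⟩
        have hssub : (Finset.univ.filter (fun z => z ∈ H w))
            ⊂ (Finset.univ.filter (fun z => z ∈ H u)) := by
          refine (Finset.ssubset_iff_of_subset hsub).mpr
            ⟨u, Finset.mem_filter.mpr ⟨Finset.mem_univ u, hSelf u (Finset.mem_univ u)⟩, ?_⟩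
          intro hmem
          exact hwu (hAnti u (Finset.mem_univ u) w hw (Finset.mem_filter.mp hmem).2)
        have hlt : (Finset.univ.filter (fun z => z ∈ H w)).card + 1
            ≤ (Finset.univ.filter (fun z => z ∈ H u)).card := Finset.card_lt_card hssub
        have h1 : (e w : ℕ) < n := (e w).isLt
        calc (e w : ℕ) + (Finset.univ.filter (fun z => z ∈ H w)).card * n
            ≤ n + (Finset.univ.filter (fun z => z ∈ H w)).card * n := by omega
          _ = ((Finset.univ.filter (fun z => z ∈ H w)).card + 1) * n := by ring
          _ ≤ (Finset.univ.filter (fun z => z ∈ H u)).card * n := Nat.mul_le_mul_right n hlt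
          _ ≤ (e u : ℕ) + (Finset.univ.filter (fun z => z ∈ H u)).card * n := Nat.le_add_left _ _
  · intro H' hH'
    exact hOpt H' (fun u _ v _ => hH' u v)
end

section
/- Let T be a finite tree and H a hub labeling of T. For each vertex u, let S_u = ⋃_{v ∈ H_u} P_{uv} be the union of the paths from u to its hubs. Then there exists a single vertex r ∈ V such that r ∈ S_u for every vertex u ∈ V. -/
open SimpleGraph

section Aux

variable {V : Type*} [DecidableEq V] {G : SimpleGraph V}

/-- In a tree, every path has length equal to the distance of its endpoints. -/
lemma tree_path_length (hT : G.IsTree) {u v : V} (p : G.Walk u v) (hp : p.IsPath) :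
    p.length = G.dist u v := by
  obtain ⟨q, hq⟩ := hT.isConnected.exists_walk_length_eq_dist u v
  have h1 : p = q.bypass := (hT.existsUnique_path u v).unique hp q.bypass_isPath
  refine le_antisymm ?_ (G.dist_le p)
  calc p.length = q.bypass.length := by rw [h1]
    _ ≤ q.length := q.length_bypass_le
    _ = G.dist u v := hq

lemma onPath_of_mem_support (hT : G.IsTree) {u v w : V} (p : G.Walk u v) (hp : p.IsPath)
    (hw : w ∈ p.support) : onPath G u v w := by
  have h1 : (p.takeUntil w hw).length = G.dist u w :=
    tree_path_length hT _ (hp.takeUntil hw)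
  have h2 : (p.dropUntil w hw).length = G.dist w v :=
    tree_path_length hT _ (hp.dropUntil hw)
  have h3 := congrArg Walk.length (p.take_spec hw)
  rw [Walk.length_append] at h3
  have h4 : p.length = G.dist u v := tree_path_length hT p hp
  unfold onPath
  omega

/-- Appending two paths that only share the middle vertex gives a path. -/
lemma isPath_append (hT : G.IsTree) {u w v : V}
    (p : G.Walk u w) (hp : p.IsPath) (q : G.Walk w v) (hq : q.IsPath)
    (hdisj : ∀ x, x ∈ p.support → x ∈ q.support → x = w) :
    (p.append q).IsPath := by
  rw [Walk.isPath_def, Walk.support_append]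
  refine List.Nodup.append hp.support_nodup (hq.support_nodup.tail) ?_
  intro x hx1 hx2
  have hx2' : x ∈ q.support := by
    rw [q.support_eq_cons]; exact List.mem_cons_of_mem _ hx2
  have hxw : x = w := hdisj x hx1 hx2'
  subst hxw
  have := q.support_eq_cons ▸ hq.support_nodup
  exact (List.nodup_cons.mp this).1 hx2

lemma mem_support_of_onPath (hT : G.IsTree) {u v w : V} (p : G.Walk u v) (hp : p.IsPath)
    (h : onPath G u v w) : w ∈ p.support := by
  obtain ⟨q1, hq1, -⟩ := hT.existsUnique_path u w
  obtain ⟨q2, hq2, -⟩ := hT.existsUnique_path w v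
  have hdisj : ∀ x, x ∈ q1.support → x ∈ q2.support → x = w := by
    intro x hx1 hx2
    have d1 := onPath_of_mem_support hT q1 hq1 hx1
    have d2 := onPath_of_mem_support hT q2 hq2 hx2
    have ht := hT.isConnected.dist_triangle (u := u) (v := x) (w := v)
    have hc : G.dist x w = G.dist w x := G.dist_comm
    unfold onPath at d1 d2 h
    have hz : G.dist x w = 0 := by omega
    exact (hT.isConnected.dist_eq_zero_iff).mp hz
  have happ : (q1.append q2).IsPath := isPath_append hT q1 hq1 q2 hq2 hdisj
  have heq : p = q1.append q2 := (hT.existsUnique_path u v).unique hp happ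
  rw [heq, Walk.mem_support_append_iff]
  exact Or.inl q1.end_mem_support

/-- Median of three vertices in a tree. -/
lemma exists_median (hT : G.IsTree) (a b c : V) :
    ∃ m : V, onPath G a b m ∧ onPath G a c m ∧ onPath G b c m := by
  obtain ⟨p, hp, -⟩ := hT.existsUnique_path b c
  -- choose m on p minimizing distance to a
  obtain ⟨m, hm⟩ : ∃ m, m ∈ p.support.argmin (G.dist a) := by
    cases ho : p.support.argmin (G.dist a) with
    | none => exact absurd (List.argmin_eq_none.mp ho) p.support_ne_nil
    | some m => exact ⟨m, by simp [ho, Option.mem_def]⟩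
  have hmem : m ∈ p.support := List.argmin_mem hm
  have hmin : ∀ x ∈ p.support, G.dist a m ≤ G.dist a x :=
    fun x hx => List.le_of_mem_argmin hx hm
  obtain ⟨q, hq, -⟩ := hT.existsUnique_path a m
  -- helper to show m is on the path from a to an endpoint
  have key : ∀ (z : V) (r : G.Walk m z), r.IsPath → (∀ x ∈ r.support, x ∈ p.support) →
      onPath G a z m := by
    intro z r hr hsub
    have hdisj : ∀ x, x ∈ q.support → x ∈ r.support → x = m := by
      intro x hx1 hx2
      have d1 := onPath_of_mem_support hT q hq hx1
      have h2 := hmin x (hsub x hx2)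
      unfold onPath at d1
      have hz : G.dist x m = 0 := by omega
      exact (hT.isConnected.dist_eq_zero_iff).mp hz
    have happ : (q.append r).IsPath := isPath_append hT q hq r hr hdisj
    exact onPath_of_mem_support hT _ happ
      (by rw [Walk.mem_support_append_iff]; exact Or.inl q.end_mem_support)
  have hab : onPath G a b m := by
    refine key b ((p.takeUntil m hmem).reverse) ((hp.takeUntil hmem).reverse) ?_
    intro x hx
    rw [Walk.support_reverse, List.mem_reverse] at hx
    exact p.support_takeUntil_subset hmem hx
  have hac : onPath G a c m := by
    refine key c (p.dropUntil m hmem) (hp.dropUntil hmem) ?_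
    intro x hx
    exact p.support_dropUntil_subset hmem hx
  exact ⟨m, hab, hac, onPath_of_mem_support hT p hp hmem⟩

/-- Splitting: a vertex on the path `a`–`b` lies before or after another vertex on it. -/
lemma onPath_split (hT : G.IsTree) {a b m m' : V} (h : onPath G a b m)
    (h' : onPath G a b m') : onPath G a m' m ∨ onPath G m' b m := by
  obtain ⟨p, hp, -⟩ := hT.existsUnique_path a b
  have hm := mem_support_of_onPath hT p hp h
  have hm' := mem_support_of_onPath hT p hp h'
  rw [← p.take_spec hm', Walk.mem_support_append_iff] at hm
  rcases hm with hm | hm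
  · exact Or.inl (onPath_of_mem_support hT _ (hp.takeUntil hm') hm)
  · exact Or.inr (onPath_of_mem_support hT _ (hp.dropUntil hm') hm)

lemma onPath_trans (hconn : G.Connected) {u x a m : V}
    (h1 : onPath G u x a) (h2 : onPath G u a m) : onPath G u x m := by
  have ht1 := hconn.dist_triangle (u := m) (v := a) (w := x)
  have ht2 := hconn.dist_triangle (u := u) (v := m) (w := x)
  unfold onPath at *
  omega

lemma onPath_combine (hconn : G.Connected) {u a m' m : V}
    (h1 : onPath G u a m') (h2 : onPath G a m' m) : onPath G u a m := by
  have ht1 := hconn.dist_triangle (u := u) (v := m') (w := m)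
  have ht2 := hconn.dist_triangle (u := u) (v := m) (w := a)
  have hc1 : G.dist m' m = G.dist m m' := G.dist_comm
  have hc2 : G.dist a m = G.dist m a := G.dist_comm
  have hc3 : G.dist m' a = G.dist a m' := G.dist_comm
  unfold onPath at *
  omega

lemma onPath_symm {u v w : V} (h : onPath G u v w) : onPath G v u w := by
  have c1 : G.dist v w = G.dist w v := G.dist_comm
  have c2 : G.dist w u = G.dist u w := G.dist_comm
  have c3 : G.dist v u = G.dist u v := G.dist_comm
  unfold onPath at *
  omega

/-- Convexity of the star `S u = {w | ∃ x ∈ H u, onPath u x w}`. -/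
lemma star_convex (hT : G.IsTree) (S : Set V) (u : V)
    (hS : ∀ w ∈ S, ∃ x, onPath G u x w ∧ ∀ m, onPath G u x m → m ∈ S) :
    ∀ a ∈ S, ∀ b ∈ S, ∀ m, onPath G a b m → m ∈ S := by
  intro a ha b hb m hm
  obtain ⟨m', hab, hau, hbu⟩ := exists_median hT a b u
  -- m' is the median of a, b, u : onPath a b m', onPath a u m', onPath b u m'
  rcases onPath_split hT hm hab with hsplit | hsplit
  · -- m between a and m', so m on path from a to u... show onPath u a m, then use a ∈ S
    have hum : onPath G u a m := by
      refine onPath_combine hT.isConnected (onPath_symm hau) hsplit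
    obtain ⟨x, hx1, hx2⟩ := hS a ha
    exact hx2 m (onPath_trans hT.isConnected hx1 hum)
  · have hum : onPath G u b m := by
      have hbm' : onPath G b m' m := by
        have c1 : G.dist b m = G.dist m b := G.dist_comm
        have c2 : G.dist m m' = G.dist m' m := G.dist_comm
        have c3 : G.dist b m' = G.dist m' b := G.dist_comm
        unfold onPath at hsplit ⊢
        omega
      exact onPath_combine hT.isConnected (onPath_symm hbu) hbm'
    obtain ⟨x, hx1, hx2⟩ := hS b hb
    exact hx2 m (onPath_trans hT.isConnected hx1 hum)

/-- Helly property for convex sets in a tree. -/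
lemma tree_helly (hT : G.IsTree) {ι : Type*} [DecidableEq ι] (s : Finset ι) (C : ι → Set V)
    (hconv : ∀ i ∈ s, ∀ a ∈ C i, ∀ b ∈ C i, ∀ m, onPath G a b m → m ∈ C i)
    (hpair : ∀ i ∈ s, ∀ j ∈ s, (C i ∩ C j).Nonempty)
    (hne : s.Nonempty) : ∃ r, ∀ i ∈ s, r ∈ C i := by
  induction s using Finset.induction generalizing C with
  | empty => exact absurd hne (by simp)
  | @insert j t hj ih =>
    rcases t.eq_empty_or_nonempty with ht | ht
    · subst ht
      obtain ⟨r, hr, -⟩ := hpair j (by simp) j (by simp)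
      exact ⟨r, by simpa using hr⟩
    · set D : ι → Set V := fun i => C i ∩ C j with hD
      have hconv' : ∀ i ∈ t, ∀ a ∈ D i, ∀ b ∈ D i, ∀ m, onPath G a b m → m ∈ D i := by
        intro i hi a ha b hb m hm
        exact ⟨hconv i (Finset.mem_insert_of_mem hi) a ha.1 b hb.1 m hm,
          hconv j (Finset.mem_insert_self j t) a ha.2 b hb.2 m hm⟩
      have hpair' : ∀ i ∈ t, ∀ k ∈ t, (D i ∩ D k).Nonempty := by
        intro i hi k hk
        obtain ⟨a, hai, haj⟩ := hpair i (Finset.mem_insert_of_mem hi) j (Finset.mem_insert_self j t)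
        obtain ⟨b, hbk, hbj⟩ := hpair k (Finset.mem_insert_of_mem hk) j (Finset.mem_insert_self j t)
        obtain ⟨c, hci, hck⟩ := hpair i (Finset.mem_insert_of_mem hi) k (Finset.mem_insert_of_mem hk)
        obtain ⟨m, hab, hac, hbc⟩ := exists_median hT a b c
        have hmj : m ∈ C j := hconv j (Finset.mem_insert_self j t) a haj b hbj m hab
        have hmi : m ∈ C i := hconv i (Finset.mem_insert_of_mem hi) a hai c hci m hac
        have hmk : m ∈ C k := hconv k (Finset.mem_insert_of_mem hk) b hbk c hck m hbc
        exact ⟨m, ⟨hmi, hmj⟩, ⟨hmk, hmj⟩⟩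
      obtain ⟨r, hr⟩ := ih D hconv' hpair' ht
      refine ⟨r, ?_⟩
      intro i hi
      rcases Finset.mem_insert.mp hi with rfl | hi
      · obtain ⟨i0, hi0⟩ := ht
        exact (hr i0 hi0).2
      · exact (hr i hi).1

end Aux

theorem hub_path_unions_common_vertex {V : Type*} [Fintype V]
    (G : SimpleGraph V) (hT : G.IsTree)
    (H : V → Set V) (hH : IsHubLabeling G H) :
    ∃ r : V, ∀ u : V, r ∈ ⋃ x ∈ H u, {w : V | onPath G u x w} := by
  classical
  have hconn := hT.isConnected
  haveI : Nonempty V := hconn.nonempty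
  set S : V → Set V := fun u => ⋃ x ∈ H u, {w : V | onPath G u x w} with hS
  have hmem : ∀ u w, w ∈ S u ↔ ∃ x ∈ H u, onPath G u x w := by
    intro u w
    simp [hS]
  have hconv : ∀ u : V, ∀ a ∈ S u, ∀ b ∈ S u, ∀ m, onPath G a b m → m ∈ S u := by
    intro u
    refine star_convex hT (S u) u ?_
    intro w hw
    obtain ⟨x, hx, hpx⟩ := (hmem u w).mp hw
    exact ⟨x, hpx, fun m hm => (hmem u m).mpr ⟨x, hx, hm⟩⟩
  have hpair : ∀ u v : V, (S u ∩ S v).Nonempty := by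
    intro u v
    obtain ⟨w, hwu, hwv, -⟩ := hH u v
    have h1 : onPath G u w w := by unfold onPath; simp
    have h2 : onPath G v w w := by unfold onPath; simp
    exact ⟨w, (hmem u w).mpr ⟨w, hwu, h1⟩, (hmem v w).mpr ⟨w, hwv, h2⟩⟩
  obtain ⟨r, hr⟩ := tree_helly hT (Finset.univ : Finset V) S
    (fun u _ => hconv u) (fun u _ v _ => hpair u v) Finset.univ_nonempty
  exact ⟨r, fun u => hr u (Finset.mem_univ u)⟩
end

section
/- Let T be a finite tree on vertex set V and let ⊑ be a linear order on V. Then the canonical labeling H^⊑ of ⊑ is a hub labeling of T, and it is hierarchical. -/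
open SimpleGraph

/-- `w` lies in the connected component of `u` of the subgraph of `G` induced on
`{x | le u x}`: there is a walk from `u` to `w` all of whose vertices `x` satisfy `le u x`. -/
def inCompAbove {V : Type*} (G : SimpleGraph V) (le : V → V → Prop) (u w : V) : Prop :=
  ∃ p : G.Walk u w, ∀ x ∈ p.support, le u x

/-- The canonical labeling of a linear order `le`: the hub set of `w` consists of all
vertices `u` such that `w` lies in the component `T_u` of `u` above `u`. -/
def canonical {V : Type*} (G : SimpleGraph V) (le : V → V → Prop) : V → Set V :=
  fun w => {u : V | inCompAbove G le u w}

theorem canonical_labeling_is_hierarchical_hub_labeling {V : Type*} [Fintype V]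
    (G : SimpleGraph V) (hT : G.IsTree)
    (le : V → V → Prop) (hle : IsLinearOrder V le) :
    IsHubLabeling G (canonical G le) ∧ IsHierarchical (canonical G le) := by
  classical
  letI : LinearOrder V :=
    { le := le
      le_refl := hle.refl
      le_trans := hle.trans
      le_antisymm := hle.antisymm
      le_total := hle.total
      toDecidableLE := fun a b => Classical.dec _ }
  constructor
  · -- hub labeling
    intro u v
    obtain ⟨p, hp⟩ := hT.isConnected.exists_walk_length_eq_dist u v
    obtain ⟨w, hws, hwmin⟩ := (p.support.toFinset).exists_min_image id
      ⟨u, by simp [Walk.start_mem_support]⟩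
    simp only [List.mem_toFinset] at hws
    have hwmin' : ∀ x ∈ p.support, le w x := fun x hx =>
      hwmin x (List.mem_toFinset.mpr hx)
    refine ⟨w, ?_, ?_, ?_⟩
    · exact ⟨(p.takeUntil w hws).reverse, fun x hx => hwmin' x
        ((Walk.support_takeUntil_subset p hws) (by simpa using hx))⟩
    · exact ⟨(p.dropUntil w hws), fun x hx => hwmin' x
        ((Walk.support_dropUntil_subset p hws) (by simpa using hx))⟩
    · have h1 : G.dist u w ≤ (p.takeUntil w hws).length := SimpleGraph.dist_le _
      have h2 : G.dist w v ≤ (p.dropUntil w hws).length := SimpleGraph.dist_le _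
      have h3 : (p.takeUntil w hws).length + (p.dropUntil w hws).length = p.length := by
        rw [← Walk.length_append, p.take_spec hws]
      have h4 : G.dist u v ≤ G.dist u w + G.dist w v := hT.isConnected.dist_triangle
      unfold onPath
      omega
  · -- hierarchical
    have key : ∀ u w, w ∈ canonical G le u → le w u := by
      intro u w hw
      obtain ⟨q, hq⟩ := hw
      exact hq u (Walk.end_mem_support q)
    refine ⟨fun u => (Finset.univ.filter (fun x => le x u)).card, ?_, ?_⟩
    · intro a b hab
      rcases hle.total a b with h | h
      · have hsub : Finset.univ.filter (fun x => le x a) ⊆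
            Finset.univ.filter (fun x => le x b) := by
          intro x hx
          simp only [Finset.mem_filter, Finset.mem_univ, true_and] at hx ⊢
          exact hle.trans x a b hx h
        have := Finset.eq_of_subset_of_card_le hsub (le_of_eq hab.symm)
        have hb : b ∈ Finset.univ.filter (fun x => le x a) := by
          rw [this]; simp [hle.refl]
        simp only [Finset.mem_filter, Finset.mem_univ, true_and] at hb
        exact hle.antisymm a b h hb
      · have hsub : Finset.univ.filter (fun x => le x b) ⊆
            Finset.univ.filter (fun x => le x a) := by
          intro x hx
          simp only [Finset.mem_filter, Finset.mem_univ, true_and] at hx ⊢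
          exact hle.trans x b a hx h
        have := Finset.eq_of_subset_of_card_le hsub (le_of_eq hab)
        have hb : a ∈ Finset.univ.filter (fun x => le x b) := by
          rw [this]; simp [hle.refl]
        simp only [Finset.mem_filter, Finset.mem_univ, true_and] at hb
        exact hle.antisymm a b hb h
    · intro u w hw
      have h := key u w hw
      apply Finset.card_le_card
      intro x hx
      simp only [Finset.mem_filter, Finset.mem_univ, true_and] at hx ⊢
      exact hle.trans x w u hx h
end

section
/- Every finite tree T on n ≥ 1 vertices admits a hierarchical hub labeling H such that |H_u| ≤ ⌊log₂ n⌋ + 1 for every vertex u. -/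
open SimpleGraph

section PathInfra
variable {V : Type*} {G : SimpleGraph V}

noncomputable def pth (hT : G.IsTree) (u v : V) : G.Walk u v :=
  (hT.existsUnique_path u v).exists.choose

lemma pth_isPath (hT : G.IsTree) (u v : V) : (pth hT u v).IsPath :=
  (hT.existsUnique_path u v).exists.choose_spec

lemma pth_unique (hT : G.IsTree) {u v : V} (p : G.Walk u v) (hp : p.IsPath) :
    p = pth hT u v :=
  (hT.existsUnique_path u v).unique hp (pth_isPath hT u v)

lemma length_pth (hT : G.IsTree) (u v : V) : (pth hT u v).length = G.dist u v := by
  obtain ⟨p, hp, hl⟩ := hT.isConnected.exists_path_of_dist u v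
  rw [← pth_unique hT p hp] at *; exact hl

lemma mem_pth_symm (hT : G.IsTree) {u v w : V} (h : w ∈ (pth hT u v).support) :
    w ∈ (pth hT v u).support := by
  rw [← pth_unique hT (pth hT u v).reverse ((pth_isPath hT u v).reverse)]
  simpa using h

lemma start_mem_pth (hT : G.IsTree) (u v : V) : u ∈ (pth hT u v).support :=
  SimpleGraph.Walk.start_mem_support _

lemma end_mem_pth (hT : G.IsTree) (u v : V) : v ∈ (pth hT u v).support :=
  SimpleGraph.Walk.end_mem_support _

lemma onPath_iff_mem (hT : G.IsTree) (u v w : V) :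
    onPath G u v w ↔ w ∈ (pth hT u v).support := by
  classical
  constructor
  · intro h
    have hq : ((pth hT u w).append (pth hT w v)).length = G.dist u v := by
      rw [SimpleGraph.Walk.length_append, length_pth, length_pth]; exact h
    have hqp := SimpleGraph.Walk.isPath_of_length_eq_dist _ hq
    rw [← pth_unique hT _ hqp]
    simp [SimpleGraph.Walk.mem_support_append_iff]
  · intro h
    have hsp := (pth hT u v).take_spec h
    have h1 : (pth hT u v).takeUntil w h = pth hT u w :=
      pth_unique hT _ ((pth_isPath hT u v).takeUntil h)
    have h2 : (pth hT u v).dropUntil w h = pth hT w v :=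
      pth_unique hT _ ((pth_isPath hT u v).dropUntil h)
    have := congrArg SimpleGraph.Walk.length hsp
    rw [SimpleGraph.Walk.length_append, h1, h2, length_pth, length_pth, length_pth] at this
    exact this

/-- the path from u to v is inside the union of paths through any w -/
lemma pth_subset_union (hT : G.IsTree) (u v w : V) :
    ∀ x ∈ (pth hT u v).support,
      x ∈ (pth hT u w).support ∨ x ∈ (pth hT w v).support := by
  classical
  intro x hx
  have hb : ((pth hT u w).append (pth hT w v)).bypass = pth hT u v :=
    pth_unique hT _ (SimpleGraph.Walk.bypass_isPath _)
  rw [← hb] at hx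
  have := SimpleGraph.Walk.support_bypass_subset _ hx
  rw [SimpleGraph.Walk.mem_support_append_iff] at this
  exact this

/-- transitivity of "c not on path" -/
lemma not_on_trans (hT : G.IsTree) {c a b e : V}
    (h1 : c ∉ (pth hT a b).support) (h2 : c ∉ (pth hT b e).support) :
    c ∉ (pth hT a e).support := by
  intro hc
  rcases pth_subset_union hT a e b c hc with h | h
  · exact h1 h
  · exact h2 h

/-- if w is an interior-or-end point of the path u→v then u is not on path w→v unless u = w -/
lemma start_not_mem_pth_of_mem (hT : G.IsTree) {u v w : V}
    (h : w ∈ (pth hT u v).support) (hne : u ≠ w) : u ∉ (pth hT w v).support := by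
  classical
  intro hu
  have hsp := (pth hT u v).take_spec h
  have h2 : (pth hT u v).dropUntil w h = pth hT w v :=
    pth_unique hT _ ((pth_isPath hT u v).dropUntil h)
  have hnd : ((pth hT u v).support).Nodup := (pth_isPath hT u v).support_nodup
  rw [← hsp, SimpleGraph.Walk.support_append] at hnd
  rw [h2] at hnd
  have hu' : u ∈ ((pth hT w v).support).tail := by
    have : (pth hT w v).support = w :: ((pth hT w v).support).tail :=
      SimpleGraph.Walk.support_eq_cons _
    rw [this] at hu
    rcases List.mem_cons.mp hu with h | h
    · exact absurd h hne
    · exact h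
  exact (List.disjoint_of_nodup_append hnd) (SimpleGraph.Walk.start_mem_support _) hu'


lemma pth_self (hT : G.IsTree) (u : V) : pth hT u u = SimpleGraph.Walk.nil :=
  (pth_unique hT SimpleGraph.Walk.nil (SimpleGraph.Walk.IsPath.nil)).symm

lemma pth_prefix_subset (hT : G.IsTree) {u v x : V} (h : x ∈ (pth hT u v).support) :
    ∀ y ∈ (pth hT u x).support, y ∈ (pth hT u v).support := by
  classical
  intro y hy
  have h1 : (pth hT u v).takeUntil x h = pth hT u x :=
    pth_unique hT _ ((pth_isPath hT u v).takeUntil h)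
  rw [← h1] at hy
  exact SimpleGraph.Walk.support_takeUntil_subset _ _ hy

lemma adj_split (hT : G.IsTree) {c d x : V} (h : G.Adj c d)
    (hd : d ∉ (pth hT x c).support) : c ∈ (pth hT x d).support := by
  have hq : ((pth hT x c).append (SimpleGraph.Walk.cons h SimpleGraph.Walk.nil)).IsPath := by
    rw [SimpleGraph.Walk.isPath_def, SimpleGraph.Walk.support_append]
    simp only [SimpleGraph.Walk.support_cons, SimpleGraph.Walk.support_nil, List.tail_cons]
    rw [List.nodup_append]
    refine ⟨(pth_isPath hT x c).support_nodup, List.nodup_singleton _, ?_⟩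
    intro a ha b hb hab
    rw [List.mem_singleton] at hb
    subst hb; subst hab; exact hd ha
  rw [← pth_unique hT _ hq, SimpleGraph.Walk.mem_support_append_iff]
  exact Or.inl (SimpleGraph.Walk.end_mem_support _)

end PathInfra

section Components
variable {V : Type*} {G : SimpleGraph V} [DecidableEq V]

/-- component of `u` in `S` after removing `c` -/
noncomputable def tcomp (hT : G.IsTree) (S : Finset V) (c u : V) : Finset V :=
  open Classical in S.filter (fun x => x ≠ c ∧ c ∉ (pth hT u x).support)

lemma mem_tcomp (hT : G.IsTree) {S : Finset V} {c u x : V} :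
    x ∈ tcomp hT S c u ↔ x ∈ S ∧ x ≠ c ∧ c ∉ (pth hT u x).support := by
  classical
  simp [tcomp, Finset.mem_filter]

lemma mem_tcomp_self (hT : G.IsTree) {S : Finset V} {c u : V} (hu : u ∈ S) (hne : u ≠ c) :
    u ∈ tcomp hT S c u := by
  rw [mem_tcomp]
  refine ⟨hu, hne, ?_⟩
  rw [pth_self]
  simp [Ne.symm hne]

lemma tcomp_subset (hT : G.IsTree) {S : Finset V} {c u : V} :
    tcomp hT S c u ⊆ S := fun x hx => ((mem_tcomp hT).mp hx).1

lemma not_mem_tcomp (hT : G.IsTree) {S : Finset V} {c u : V} : c ∉ tcomp hT S c u := by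
  rw [mem_tcomp]; tauto

lemma tcomp_card_lt (hT : G.IsTree) {S : Finset V} {c u : V} (hc : c ∈ S) :
    (tcomp hT S c u).card < S.card := by
  have hsub : tcomp hT S c u ⊆ S.erase c := by
    intro x hx
    rw [mem_tcomp] at hx
    exact Finset.mem_erase.mpr ⟨hx.2.1, hx.1⟩
  calc (tcomp hT S c u).card ≤ (S.erase c).card := Finset.card_le_card hsub
    _ < S.card := Finset.card_erase_lt_of_mem hc

lemma tcomp_eq_of_mem (hT : G.IsTree) {S : Finset V} {c u x : V}
    (hx : x ∈ tcomp hT S c u) : tcomp hT S c x = tcomp hT S c u := by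
  rw [mem_tcomp] at hx
  ext y
  rw [mem_tcomp, mem_tcomp]
  constructor
  · rintro ⟨hyS, hyc, hy⟩
    exact ⟨hyS, hyc, not_on_trans hT hx.2.2 hy⟩
  · rintro ⟨hyS, hyc, hy⟩
    refine ⟨hyS, hyc, not_on_trans hT (fun hc => hx.2.2 (mem_pth_symm hT hc)) hy⟩

def IsSubtree (hT : G.IsTree) (S : Finset V) : Prop :=
  ∀ u ∈ S, ∀ v ∈ S, ∀ x ∈ (pth hT u v).support, x ∈ S

lemma tcomp_isSubtree (hT : G.IsTree) {S : Finset V} (hS : IsSubtree hT S) (c u : V) :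
    IsSubtree hT (tcomp hT S c u) := by
  intro y hy z hz x hx
  rw [mem_tcomp] at hy hz ⊢
  have hyz : c ∉ (pth hT y z).support :=
    not_on_trans hT (fun hc => hy.2.2 (mem_pth_symm hT hc)) hz.2.2
  have hxS : x ∈ S := hS y hy.1 z hz.1 x hx
  have hyx : c ∉ (pth hT y x).support := fun hc => hyz (pth_prefix_subset hT hx c hc)
  refine ⟨hxS, ?_, not_on_trans hT hy.2.2 hyx⟩
  intro hxc; subst hxc; exact hyz hx

def IsCentroid (hT : G.IsTree) (S : Finset V) (c : V) : Prop :=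
  c ∈ S ∧ ∀ u ∈ S, u ≠ c → (tcomp hT S c u).card ≤ S.card / 2

lemma exists_centroid (hT : G.IsTree) (S : Finset V) (hne : S.Nonempty)
    (hsub : IsSubtree hT S) : ∃ c, IsCentroid hT S c := by
  classical
  set f : V → ℕ := fun c => Finset.sup (S.erase c) (fun u => (tcomp hT S c u).card) with hf
  obtain ⟨c, hcS, hcmin⟩ := S.exists_min_image f hne
  refine ⟨c, hcS, ?_⟩
  by_contra hbad
  push_neg at hbad
  obtain ⟨u, huS, hunec, hB⟩ := hbad
  set B := tcomp hT S c u with hBdef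
  have hBS : B ⊆ S := tcomp_subset hT
  have hcu : c ≠ u := Ne.symm hunec
  obtain ⟨d, hadj, q, hqeq⟩ := SimpleGraph.Walk.exists_eq_cons_of_ne hcu (pth hT c u)
  have hpq : (SimpleGraph.Walk.cons hadj q).IsPath := by rw [← hqeq]; exact pth_isPath hT c u
  rw [SimpleGraph.Walk.cons_isPath_iff] at hpq
  have hqpth : q = pth hT d u := pth_unique hT q hpq.1
  have hcq : c ∉ (pth hT d u).support := by rw [← hqpth]; exact hpq.2
  have hdmem : d ∈ (pth hT c u).support := by
    rw [hqeq, SimpleGraph.Walk.support_cons]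
    exact List.mem_cons_of_mem _ (SimpleGraph.Walk.start_mem_support _)
  have hdS : d ∈ S := hsub c hcS u huS d hdmem
  have hdB : d ∈ B := by
    rw [hBdef, mem_tcomp]
    exact ⟨hdS, hadj.ne', fun hc => hcq (mem_pth_symm hT hc)⟩
  -- key subset facts
  have hcaseA : tcomp hT S d c ⊆ S \ B := by
    intro x hx
    rw [mem_tcomp] at hx
    rw [Finset.mem_sdiff]
    refine ⟨hx.1, ?_⟩
    intro hxB
    rw [hBdef, mem_tcomp] at hxB
    -- c ∉ pth d x
    have h1 : c ∉ (pth hT d x).support :=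
      not_on_trans hT hcq hxB.2.2
    -- adjacency split: d ∉ pth x c → c ∈ pth x d
    have h2 : d ∉ (pth hT x c).support := fun hc => hx.2.2 (mem_pth_symm hT hc)
    have h3 : c ∈ (pth hT x d).support := adj_split hT hadj h2
    exact h1 (mem_pth_symm hT h3)
  have hcaseB : ∀ y ∈ S.erase d, d ∈ (pth hT c y).support →
      tcomp hT S d y ⊆ B.erase d := by
    intro y _ hdy x hx
    rw [mem_tcomp] at hx
    have hdcx : d ∈ (pth hT c x).support := by
      by_contra hdcx
      have h1 : d ∉ (pth hT x y).support := fun hc => hx.2.2 (mem_pth_symm hT hc)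
      have h2 : d ∉ (pth hT c y).support :=
        not_on_trans hT hdcx h1
      exact h2 hdy
    have hcdx : c ∉ (pth hT d x).support :=
      start_not_mem_pth_of_mem hT hdcx hadj.ne
    have hxc : x ≠ c := by
      intro hxc; subst hxc
      exact hcdx (SimpleGraph.Walk.end_mem_support _)
    refine Finset.mem_erase.mpr ⟨hx.2.1, ?_⟩
    rw [hBdef, mem_tcomp]
    refine ⟨hx.1, hxc, ?_⟩
    exact not_on_trans hT (fun hc => hcq (mem_pth_symm hT hc)) hcdx
  -- now bound f d
  have hfd : f d ≤ max (S.card - B.card) (B.card - 1) := by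
    rw [hf]
    apply Finset.sup_le
    intro y hy
    by_cases hdy : d ∈ (pth hT c y).support
    · calc (tcomp hT S d y).card ≤ (B.erase d).card :=
            Finset.card_le_card (hcaseB y hy hdy)
        _ = B.card - 1 := Finset.card_erase_of_mem hdB
        _ ≤ max (S.card - B.card) (B.card - 1) := le_max_right _ _
    · have hyc : y ∈ tcomp hT S d c := by
        rw [mem_tcomp]
        exact ⟨Finset.mem_of_mem_erase hy, Finset.ne_of_mem_erase hy, hdy⟩
      calc (tcomp hT S d y).card = (tcomp hT S d c).card := by rw [tcomp_eq_of_mem hT hyc]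
        _ ≤ (S \ B).card := Finset.card_le_card hcaseA
        _ = S.card - B.card := Finset.card_sdiff_of_subset hBS
        _ ≤ max (S.card - B.card) (B.card - 1) := le_max_left _ _
  have hfc : B.card ≤ f c := by
    rw [hf]
    exact Finset.le_sup (f := fun u => (tcomp hT S c u).card)
      (Finset.mem_erase.mpr ⟨hunec, huS⟩)
  have hBle : B.card ≤ S.card := Finset.card_le_card hBS
  have : f d < f c := by
    apply lt_of_le_of_lt hfd
    apply lt_of_lt_of_le _ hfc
    apply max_lt <;> omega
  exact absurd (hcmin d hdS) (not_le.mpr this)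

end Components

section Hubs
variable {V : Type*} {G : SimpleGraph V} [DecidableEq V]

noncomputable def centroid (hT : G.IsTree) (S : Finset V) (h1 : S.Nonempty)
    (h2 : IsSubtree hT S) : V :=
  (exists_centroid hT S h1 h2).choose

lemma centroid_spec (hT : G.IsTree) (S : Finset V) (h1 : S.Nonempty)
    (h2 : IsSubtree hT S) : IsCentroid hT S (centroid hT S h1 h2) :=
  (exists_centroid hT S h1 h2).choose_spec

lemma tcomp_ssubset (hT : G.IsTree) {S : Finset V} {c u : V} (hc : c ∈ S) :
    tcomp hT S c u ⊂ S :=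
  Finset.ssubset_iff_of_subset (tcomp_subset hT) |>.mpr ⟨c, hc, not_mem_tcomp hT⟩

open Classical in
noncomputable def hubs (hT : G.IsTree) (S : Finset V) (u : V) : List V :=
  if h : S.Nonempty ∧ IsSubtree hT S ∧ u ∈ S then
    if u = centroid hT S h.1 h.2.1 then [u]
    else centroid hT S h.1 h.2.1 :: hubs hT (tcomp hT S (centroid hT S h.1 h.2.1) u) u
  else []
termination_by S.card
decreasing_by
  exact tcomp_card_lt hT (centroid_spec hT S h.1 h.2.1).1

lemma hubs_eq (hT : G.IsTree) (S : Finset V) (u : V) (h1 : S.Nonempty)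
    (h2 : IsSubtree hT S) (hu : u ∈ S) :
    hubs hT S u = if u = centroid hT S h1 h2 then [u]
      else centroid hT S h1 h2 :: hubs hT (tcomp hT S (centroid hT S h1 h2) u) u := by
  rw [hubs, dif_pos ⟨h1, h2, hu⟩]

/-- invariants needed for the recursion, all at once -/
lemma tcomp_invar (hT : G.IsTree) {S : Finset V} (h1 : S.Nonempty) (h2 : IsSubtree hT S)
    {u : V} (hu : u ∈ S) (hne : u ≠ centroid hT S h1 h2) :
    (tcomp hT S (centroid hT S h1 h2) u).Nonempty ∧
      IsSubtree hT (tcomp hT S (centroid hT S h1 h2) u) ∧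
      u ∈ tcomp hT S (centroid hT S h1 h2) u :=
  ⟨⟨u, mem_tcomp_self hT hu hne⟩, tcomp_isSubtree hT h2 _ _, mem_tcomp_self hT hu hne⟩

lemma hubs_mem_subset (hT : G.IsTree) (S : Finset V) : S.Nonempty → IsSubtree hT S →
    ∀ u ∈ S, ∀ w ∈ hubs hT S u, w ∈ S := by
  induction S using Finset.strongInduction with
  | _ S ih =>
    intro h1 h2 u hu w hw
    rw [hubs_eq hT S u h1 h2 hu] at hw
    set c := centroid hT S h1 h2 with hc
    by_cases huc : u = c
    · rw [if_pos huc] at hw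
      rw [List.mem_singleton.mp hw]
      exact hu
    · rw [if_neg huc] at hw
      rcases List.mem_cons.mp hw with h | h
      · exact h ▸ (centroid_spec hT S h1 h2).1
      · obtain ⟨n1, n2, n3⟩ := tcomp_invar hT h1 h2 hu huc
        exact tcomp_subset hT (ih _ (tcomp_ssubset hT (centroid_spec hT S h1 h2).1)
          n1 n2 u n3 w h)

lemma hubs_self_mem (hT : G.IsTree) (S : Finset V) : S.Nonempty → IsSubtree hT S →
    ∀ u ∈ S, ∃ t, hubs hT S u = t ++ [u] := by
  induction S using Finset.strongInduction with
  | _ S ih =>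
    intro h1 h2 u hu
    rw [hubs_eq hT S u h1 h2 hu]
    set c := centroid hT S h1 h2 with hc
    by_cases huc : u = c
    · exact ⟨[], by rw [if_pos huc]; simp⟩
    · rw [if_neg huc]
      obtain ⟨n1, n2, n3⟩ := tcomp_invar hT h1 h2 hu huc
      obtain ⟨t, ht⟩ := ih _ (tcomp_ssubset hT (centroid_spec hT S h1 h2).1) n1 n2 u n3
      exact ⟨c :: t, by rw [ht]; simp⟩

lemma centroid_mem_hubs (hT : G.IsTree) (S : Finset V) (h1 : S.Nonempty)
    (h2 : IsSubtree hT S) {u : V} (hu : u ∈ S) :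
    centroid hT S h1 h2 ∈ hubs hT S u := by
  rw [hubs_eq hT S u h1 h2 hu]
  by_cases huc : u = centroid hT S h1 h2
  · rw [if_pos huc]; simp [huc]
  · rw [if_neg huc]; simp

lemma hubs_prefix (hT : G.IsTree) (S : Finset V) : S.Nonempty → IsSubtree hT S →
    ∀ u ∈ S, ∀ w ∈ hubs hT S u, hubs hT S w <+: hubs hT S u := by
  induction S using Finset.strongInduction with
  | _ S ih =>
    intro h1 h2 u hu w hw
    rw [hubs_eq hT S u h1 h2 hu] at hw ⊢
    set c := centroid hT S h1 h2 with hc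
    by_cases huc : u = c
    · rw [if_pos huc] at hw ⊢
      rw [List.mem_singleton.mp hw, hubs_eq hT S u h1 h2 hu, if_pos huc]
    · rw [if_neg huc] at hw ⊢
      obtain ⟨n1, n2, n3⟩ := tcomp_invar hT h1 h2 hu huc
      rcases List.mem_cons.mp hw with h | h
      · rw [h, hubs_eq hT S c h1 h2 (centroid_spec hT S h1 h2 |>.1 |> (hc ▸ ·)), if_pos hc]
        exact ⟨_, rfl⟩
      · have hwc : w ∈ tcomp hT S c u :=
          hubs_mem_subset hT _ n1 n2 u n3 w h
        have hwS : w ∈ S := tcomp_subset hT hwc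
        have hwnec : w ≠ c := ((mem_tcomp hT).mp hwc).2.1
        rw [hubs_eq hT S w h1 h2 hwS, if_neg hwnec]
        have htc : tcomp hT S c w = tcomp hT S c u := tcomp_eq_of_mem hT hwc
        rw [htc]
        exact List.cons_prefix_cons.mpr
          ⟨rfl, ih _ (tcomp_ssubset hT (centroid_spec hT S h1 h2).1) n1 n2 u n3 w h⟩

lemma hubs_length (hT : G.IsTree) (S : Finset V) : S.Nonempty → IsSubtree hT S →
    ∀ u ∈ S, (hubs hT S u).length ≤ Nat.log 2 S.card + 1 := by
  induction S using Finset.strongInduction with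
  | _ S ih =>
    intro h1 h2 u hu
    rw [hubs_eq hT S u h1 h2 hu]
    set c := centroid hT S h1 h2 with hc
    by_cases huc : u = c
    · rw [if_pos huc]; simp
    · rw [if_neg huc]
      obtain ⟨n1, n2, n3⟩ := tcomp_invar hT h1 h2 hu huc
      have hlen := ih _ (tcomp_ssubset hT (centroid_spec hT S h1 h2).1) n1 n2 u n3
      rw [← hc] at hlen
      simp only [List.length_cons]
      set m := (tcomp hT S c u).card with hm
      have hm1 : 1 ≤ m := Finset.card_pos.mpr n1
      have hm2 : m ≤ S.card / 2 := (centroid_spec hT S h1 h2).2 u hu huc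
      have hkey : Nat.log 2 m + 1 ≤ Nat.log 2 S.card := by
        have h2m : m * 2 ≤ S.card := by omega
        calc Nat.log 2 m + 1 = Nat.log 2 (m * 2) :=
              (Nat.log_mul_base (by norm_num) (by omega)).symm
          _ ≤ Nat.log 2 S.card := Nat.log_mono_right h2m
      omega

lemma hubs_cover (hT : G.IsTree) (S : Finset V) : S.Nonempty → IsSubtree hT S →
    ∀ u ∈ S, ∀ v ∈ S, ∃ w, w ∈ hubs hT S u ∧ w ∈ hubs hT S v ∧
      w ∈ (pth hT u v).support := by
  induction S using Finset.strongInduction with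
  | _ S ih =>
    intro h1 h2 u hu v hv
    set c := centroid hT S h1 h2 with hc
    by_cases huc : u = c
    · exact ⟨c, centroid_mem_hubs hT S h1 h2 hu, centroid_mem_hubs hT S h1 h2 hv,
        huc ▸ SimpleGraph.Walk.start_mem_support _⟩
    by_cases hvc : v = c
    · exact ⟨c, centroid_mem_hubs hT S h1 h2 hu, centroid_mem_hubs hT S h1 h2 hv,
        hvc ▸ SimpleGraph.Walk.end_mem_support _⟩
    by_cases hsame : c ∈ (pth hT u v).support
    · exact ⟨c, centroid_mem_hubs hT S h1 h2 hu, centroid_mem_hubs hT S h1 h2 hv, hsame⟩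
    · have hvmem : v ∈ tcomp hT S c u := (mem_tcomp hT).mpr ⟨hv, hvc, hsame⟩
      obtain ⟨n1, n2, n3⟩ := tcomp_invar hT h1 h2 hu huc
      obtain ⟨w, hw1, hw2, hw3⟩ :=
        ih _ (tcomp_ssubset hT (centroid_spec hT S h1 h2).1) n1 n2 u n3 v hvmem
      refine ⟨w, ?_, ?_, hw3⟩
      · rw [hubs_eq hT S u h1 h2 hu, if_neg huc]
        exact List.mem_cons_of_mem _ hw1
      · rw [hubs_eq hT S v h1 h2 hv, if_neg hvc]
        have htc : tcomp hT S c v = tcomp hT S c u := tcomp_eq_of_mem hT hvmem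
        rw [htc]
        exact List.mem_cons_of_mem _ hw2

end Hubs
theorem exists_hierarchical_hub_labeling_log_bound {V : Type*} [Fintype V]
    (G : SimpleGraph V) (hT : G.IsTree) :
    ∃ H : V → Set V, IsHubLabeling G H ∧ IsHierarchical H ∧
      ∀ u : V, (H u).ncard ≤ Nat.log 2 (Fintype.card V) + 1 := by
  classical
  cases isEmpty_or_nonempty V with
  | inl h =>
    refine ⟨fun _ => ∅, fun u => (IsEmpty.false u).elim,
      ⟨fun _ => 0, fun a => (IsEmpty.false a).elim, fun u => (IsEmpty.false u).elim⟩,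
      fun u => (IsEmpty.false u).elim⟩
  | inr h =>
    have h1 : (Finset.univ : Finset V).Nonempty := Finset.univ_nonempty
    have h2 : IsSubtree hT Finset.univ := fun u _ v _ x _ => Finset.mem_univ x
    set L : V → List V := fun u => hubs hT Finset.univ u with hL
    refine ⟨fun u => {x | x ∈ L u}, ?_, ?_, ?_⟩
    · intro u v
      obtain ⟨w, hw1, hw2, hw3⟩ := hubs_cover hT Finset.univ h1 h2 u (Finset.mem_univ u)
        v (Finset.mem_univ v)
      exact ⟨w, hw1, hw2, (onPath_iff_mem hT u v w).mpr hw3⟩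
    · -- hierarchical
      letI P : PartialOrder V := {
        le := fun a b => a ∈ L b
        le_refl := fun a => by
          obtain ⟨t, ht⟩ := hubs_self_mem hT _ h1 h2 a (Finset.mem_univ a)
          show a ∈ L a
          rw [hL]; simp only []
          rw [ht]; simp
        le_trans := fun a b c hab hbc =>
          (hubs_prefix hT _ h1 h2 c (Finset.mem_univ c) b hbc).subset hab
        le_antisymm := fun a b hab hba => by
          have p1 := hubs_prefix hT _ h1 h2 b (Finset.mem_univ b) a hab
          have p2 := hubs_prefix hT _ h1 h2 a (Finset.mem_univ a) b hba
          have heq : L a = L b := p1.sublist.antisymm p2.sublist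
          obtain ⟨t, ht⟩ := hubs_self_mem hT _ h1 h2 a (Finset.mem_univ a)
          obtain ⟨s, hs⟩ := hubs_self_mem hT _ h1 h2 b (Finset.mem_univ b)
          have : some a = some b := by
            rw [show some a = (t ++ [a]).getLast? by simp, show some b = (s ++ [b]).getLast? by simp, ← ht, ← hs]
            exact congrArg List.getLast? heq
          exact Option.some_injective _ this }
      letI : Fintype (LinearExtension V) := inferInstanceAs (Fintype V)
      refine ⟨fun u => ((monoEquivOfFin (LinearExtension V) rfl).symm
        (toLinearExtension u) : Fin _).val, ?_, ?_⟩
      · intro a b hab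
        have := (monoEquivOfFin (LinearExtension V) rfl).symm.injective
          (Fin.val_injective hab)
        exact this
      · intro u w hw
        have hle : (w : V) ≤ u := hw
        have : toLinearExtension w ≤ toLinearExtension u := toLinearExtension.monotone hle
        exact (monoEquivOfFin (LinearExtension V) rfl).symm.monotone this
    · intro u
      show {x | x ∈ L u}.ncard ≤ _
      have hset : {x | x ∈ L u} = ↑(L u).toFinset := by ext x; simp
      rw [hset, Set.ncard_coe_finset]
      calc (L u).toFinset.card ≤ (L u).length := (L u).toFinset_card_le
        _ ≤ Nat.log 2 (Finset.univ : Finset V).card + 1 :=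
            hubs_length hT _ h1 h2 u (Finset.mem_univ u)
        _ = Nat.log 2 (Fintype.card V) + 1 := by rw [Finset.card_univ]
end

section
/- Let T be a finite tree and ⊑ a linear order on its vertex set V whose canonical labeling H^⊑ is ℓ1-optimal, i.e., minimizes ∑_{u ∈ V} |H_u| over all hub labelings of T. Then for all vertices u, v with u ≠ v and v ∈ T_u, one has M_u ≥ M_v. -/
open SimpleGraph

/-- The connected component of `w` in the subgraph of `G` induced on `A`. -/
def compIn {V : Type*} (G : SimpleGraph V) (A : Set V) (w : V) : Set V :=
  {x : V | ∃ p : G.Walk w x, ∀ y ∈ p.support, y ∈ A}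

/-- The maximum number of vertices in a connected component of the subgraph of `G`
induced on `A` (equal to `0` if `A` is empty). -/
noncomputable def maxCompCard {V : Type*} (G : SimpleGraph V) (A : Set V) : ℕ :=
  sSup {k : ℕ | ∃ w ∈ A, k = (compIn G A w).ncard}

/-- `M_u`: the size of `T_u` minus the maximum size of a connected component of the
subgraph induced on `T_u \ {u}`. -/
noncomputable def Msep {V : Type*} (G : SimpleGraph V) (le : V → V → Prop) (u : V) : ℕ :=
  {w : V | inCompAbove G le u w}.ncard -
    maxCompCard G ({w : V | inCompAbove G le u w} \ {u})

namespace HLaux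
set_option linter.unusedSectionVars false

variable {V : Type*} [DecidableEq V] {G : SimpleGraph V} {le : V → V → Prop}

noncomputable def tp (hT : G.IsTree) (u v : V) : G.Walk u v :=
  (hT.existsUnique_path u v).exists.choose

lemma tp_isPath (hT : G.IsTree) (u v : V) : (tp hT u v).IsPath :=
  (hT.existsUnique_path u v).exists.choose_spec

lemma tp_unique (hT : G.IsTree) {u v : V} {p : G.Walk u v} (hp : p.IsPath) :
    p = tp hT u v :=
  (hT.existsUnique_path u v).unique hp (tp_isPath hT u v)

lemma tp_support_subset (hT : G.IsTree) {u v : V} (p : G.Walk u v) :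
    (tp hT u v).support ⊆ p.support := by
  rw [← tp_unique hT p.bypass_isPath]
  exact p.support_bypass_subset

lemma dist_eq_tp_length (hT : G.IsTree) (u v : V) :
    G.dist u v = (tp hT u v).length := by
  obtain ⟨p, hp, hl⟩ := hT.isConnected.exists_path_of_dist u v
  rw [← hl, tp_unique hT hp]

lemma onPath_of_mem (hT : G.IsTree) {u v w : V} (h : w ∈ (tp hT u v).support) :
    onPath G u v w := by
  have hsp := (tp hT u v).take_spec h
  have h1 : (tp hT u v).takeUntil w h = tp hT u w :=
    tp_unique hT ((tp_isPath hT u v).takeUntil h)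
  have h2 : (tp hT u v).dropUntil w h = tp hT w v :=
    tp_unique hT ((tp_isPath hT u v).dropUntil h)
  show G.dist u w + G.dist w v = G.dist u v
  rw [dist_eq_tp_length hT u w, dist_eq_tp_length hT w v, dist_eq_tp_length hT u v,
    ← hsp, Walk.length_append, h1, h2]

lemma tp_take (hT : G.IsTree) {u v w : V} (h : w ∈ (tp hT u v).support) :
    (tp hT u w).support ⊆ (tp hT u v).support := by
  rw [← tp_unique hT ((tp_isPath hT u v).takeUntil h)]
  exact Walk.support_takeUntil_subset _ h

lemma tp_drop (hT : G.IsTree) {u v w : V} (h : w ∈ (tp hT u v).support) :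
    (tp hT w v).support ⊆ (tp hT u v).support := by
  rw [← tp_unique hT ((tp_isPath hT u v).dropUntil h)]
  exact Walk.support_dropUntil_subset _ h

lemma mem_tp_symm (hT : G.IsTree) {u v x : V} (h : x ∈ (tp hT u v).support) :
    x ∈ (tp hT v u).support := by
  rw [← tp_unique hT ((tp_isPath hT u v).reverse), Walk.support_reverse, List.mem_reverse]
  exact h

lemma finset_min (hle : IsLinearOrder V le) (s : Finset V) (hs : s.Nonempty) :
    ∃ m ∈ s, ∀ y ∈ s, le m y := by
  haveI := hle
  induction s using Finset.cons_induction with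
  | empty => exact absurd hs (by simp)
  | @cons a t hat ih =>
    rcases t.eq_empty_or_nonempty with rfl | ht
    · refine ⟨a, by simp, ?_⟩
      intro y hy
      rcases Finset.mem_cons.mp hy with h | h
      · subst h; exact Std.Refl.refl _
      · simp at h
    · obtain ⟨m, hm, hmin⟩ := ih ht
      rcases Std.Total.total (r := le) a m with h | h
      · refine ⟨a, by simp, ?_⟩
        intro y hy
        rcases Finset.mem_cons.mp hy with h' | hy
        · subst h'; exact Std.Refl.refl _
        · exact IsTrans.trans (r := le) _ _ _ h (hmin y hy)
      · refine ⟨m, Finset.mem_cons_of_mem hm, ?_⟩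
        intro y hy
        rcases Finset.mem_cons.mp hy with h' | hy
        · subst h'; exact h
        · exact hmin y hy

lemma exists_min (hle : IsLinearOrder V le) {S : Set V} (hfin : S.Finite) (h : S.Nonempty) :
    ∃ m ∈ S, ∀ y ∈ S, le m y := by
  obtain ⟨m, hm, hmin⟩ := finset_min hle hfin.toFinset (by simpa using h)
  exact ⟨m, by simpa using hm, fun y hy => hmin y (by simpa using hy)⟩

lemma le_of_inComp {u w : V} (h : inCompAbove G le u w) : le u w := by
  obtain ⟨p, hp⟩ := h
  exact hp w p.end_mem_support

lemma inComp_self (hle : IsLinearOrder V le) (u : V) : inCompAbove G le u u := by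
  haveI := hle
  exact ⟨Walk.nil, by simp [Std.Refl.refl (r := le) u]⟩

lemma inComp_trans (hle : IsLinearOrder V le) {u v x : V}
    (h1 : inCompAbove G le u v) (h2 : inCompAbove G le v x) : inCompAbove G le u x := by
  haveI := hle
  obtain ⟨p, hp⟩ := h1
  obtain ⟨q, hq⟩ := h2
  refine ⟨p.append q, fun y hy => ?_⟩
  rcases (Walk.mem_support_append_iff _ _).mp hy with h | h
  · exact hp y h
  · exact IsTrans.trans (r := le) _ _ _ (le_of_inComp ⟨p, hp⟩) (hq y h)

lemma tp_support_le (hT : G.IsTree) {u w : V} (h : inCompAbove G le u w) :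
    ∀ x ∈ (tp hT u w).support, le u x := by
  obtain ⟨p, hp⟩ := h
  exact fun x hx => hp x (tp_support_subset hT p hx)

lemma inComp_support_mem (hT : G.IsTree) {u w : V} (h : inCompAbove G le u w) :
    ∀ y ∈ (tp hT u w).support, inCompAbove G le u y := by
  intro y hy
  exact ⟨(tp hT u w).takeUntil y hy,
    fun z hz => tp_support_le hT h z (Walk.support_takeUntil_subset _ hy hz)⟩

lemma compIn_subset {A : Set V} {w : V} : compIn G A w ⊆ A := by
  rintro x ⟨p, hp⟩
  exact hp x p.end_mem_support

lemma mem_compIn_self {A : Set V} {w : V} (h : w ∈ A) : w ∈ compIn G A w :=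
  ⟨Walk.nil, by simpa using h⟩

lemma compIn_eq_of_mem {A : Set V} {w x : V} (h : x ∈ compIn G A w) :
    compIn G A x = compIn G A w := by
  obtain ⟨p, hp⟩ := h
  ext z
  constructor
  · rintro ⟨q, hq⟩
    refine ⟨p.append q, fun y hy => ?_⟩
    rcases (Walk.mem_support_append_iff _ _).mp hy with h | h
    exacts [hp y h, hq y h]
  · rintro ⟨q, hq⟩
    refine ⟨p.reverse.append q, fun y hy => ?_⟩
    rcases (Walk.mem_support_append_iff _ _).mp hy with h | h
    · exact hp y (by rwa [Walk.support_reverse, List.mem_reverse] at h)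
    · exact hq y h

lemma support_subset_compIn {A : Set V} {w x : V} (p : G.Walk w x)
    (hp : ∀ y ∈ p.support, y ∈ A) : ∀ y ∈ p.support, y ∈ compIn G A w := by
  intro y hy
  exact ⟨p.takeUntil y hy, fun z hz => hp z (Walk.support_takeUntil_subset _ hy hz)⟩

lemma le_maxCompCard [Fintype V] {A : Set V} {w : V} (hw : w ∈ A) :
    (compIn G A w).ncard ≤ maxCompCard G A := by
  apply le_csSup
  · refine ⟨Fintype.card V, ?_⟩
    rintro k ⟨x, hx, rfl⟩
    simpa [Set.ncard_univ] using Set.ncard_le_ncard (Set.subset_univ (compIn G A x)) Set.finite_univ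
  · exact ⟨w, hw, rfl⟩

lemma maxCompCard_exists [Fintype V] {A : Set V} (h : A.Nonempty) :
    ∃ w ∈ A, maxCompCard G A = (compIn G A w).ncard := by
  have hmem : maxCompCard G A ∈ {k : ℕ | ∃ w ∈ A, k = (compIn G A w).ncard} := by
    apply Nat.sSup_mem
    · obtain ⟨w, hw⟩ := h
      exact ⟨_, w, hw, rfl⟩
    · refine ⟨Fintype.card V, ?_⟩
      rintro k ⟨x, hx, rfl⟩
      simpa [Set.ncard_univ] using
        Set.ncard_le_ncard (Set.subset_univ (compIn G A x)) Set.finite_univ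
  exact hmem

lemma sum_ncard_comm [Fintype V] (p : V → V → Prop) :
    ∑ x : V, {w | p w x}.ncard = ∑ w : V, {x | p w x}.ncard := by
  classical
  have h : ∀ q : V → Prop, {y | q y}.ncard = ∑ y : V, if q y then 1 else 0 := by
    intro q
    classical
    rw [Set.ncard_eq_toFinset_card', Set.toFinset_setOf, ← Finset.card_filter]
  simp only [h]
  exact Finset.sum_comm

lemma sum_three {V : Type*} [Fintype V] [DecidableEq V] (f g : V → ℕ) (u c : V) (huc : u ≠ c)
    (h : ∀ w, w ≠ u → w ≠ c → f w = g w) :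
    g u + g c + ∑ w : V, f w = f u + f c + ∑ w : V, g w := by
  classical
  have hsplit : ∀ F : V → ℕ, ∑ w : V, F w
      = F u + (F c + ∑ w ∈ (Finset.univ.erase u).erase c, F w) := by
    intro F
    rw [Finset.add_sum_erase _ F (Finset.mem_erase.mpr ⟨Ne.symm huc, Finset.mem_univ c⟩),
      Finset.add_sum_erase _ F (Finset.mem_univ u)]
  rw [hsplit f, hsplit g]
  have hR : ∑ w ∈ (Finset.univ.erase u).erase c, f w
      = ∑ w ∈ (Finset.univ.erase u).erase c, g w := by
    apply Finset.sum_congr rfl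
    intro w hw
    obtain ⟨hwc, hw2⟩ := Finset.mem_erase.mp hw
    obtain ⟨hwu, _⟩ := Finset.mem_erase.mp hw2
    exact h w hwu hwc
  omega

lemma child_step {V : Type*} [Fintype V] [DecidableEq V] {G : SimpleGraph V} (hT : G.IsTree)
    {le : V → V → Prop} (hle : IsLinearOrder V le)
    (hopt : ∀ H' : V → Set V, IsHubLabeling G H' →
      ∑ u : V, (canonical G le u).ncard ≤ ∑ u : V, (H' u).ncard)
    {u c : V} (hne0 : c ≠ u) (hc : inCompAbove G le u c)
    (hchild : {w | inCompAbove G le c w} = compIn G ({w | inCompAbove G le u w} \ {u}) c) :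
    Msep G le c ≤ Msep G le u := by
  haveI := hle
  classical
  set Tu := {w | inCompAbove G le u w} with hTu
  set Tc := {w | inCompAbove G le c w} with hTc
  set D := {x | inCompAbove G le u x ∧ c ∈ (tp hT u x).support} with hD
  have hne : c ≠ u := hne0
  have hTcu : Tc ⊆ Tu := fun x hx => inComp_trans hle hc hx
  have huc : le u c := le_of_inComp hc
  have hcTu : c ∈ Tu := hc
  have hunotTc : u ∉ Tc := fun h => hne (Std.Antisymm.antisymm _ _ (le_of_inComp h) huc)
  have hcD : c ∈ D := ⟨hc, Walk.end_mem_support _⟩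
  have hDTu : D ⊆ Tu := fun x hx => hx.1
  -- D is contained in T_c
  have hDTc : D ⊆ Tc := by
    intro x hx
    obtain ⟨hxu, hcx⟩ := hx
    have hdrop : (tp hT u x).dropUntil c hcx = tp hT c x :=
      tp_unique hT ((tp_isPath hT u x).dropUntil hcx)
    have hu_not : u ∉ (tp hT c x).support := by
      intro hu
      have hspec := (tp hT u x).take_spec hcx
      have hsupp : (tp hT u x).support
          = ((tp hT u x).takeUntil c hcx).support ++ ((tp hT u x).dropUntil c hcx).support.tail := by
        conv_lhs => rw [← hspec]
        exact Walk.support_append _ _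
      have hnd := (tp_isPath hT u x).support_nodup
      rw [hsupp] at hnd
      have hdisj := List.disjoint_of_nodup_append hnd
      have h1 : u ∈ ((tp hT u x).takeUntil c hcx).support := Walk.start_mem_support _
      have h2 : u ∈ (tp hT c x).support.tail := by
        have h3 := hu
        rw [(tp hT c x).support_eq_cons] at h3
        rcases List.mem_cons.mp h3 with h4 | h4
        · exact absurd h4.symm hne
        · exact h4
      exact hdisj h1 (by rw [hdrop]; exact h2)
    show x ∈ Tc
    rw [hchild]
    refine ⟨tp hT c x, fun y hy => ?_⟩
    have hy' : y ∈ (tp hT u x).support := by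
      rw [← hdrop] at hy
      exact Walk.support_dropUntil_subset _ hcx hy
    refine ⟨inComp_support_mem hT hxu y hy', fun hyu => ?_⟩
    have : y = u := hyu
    exact hu_not (this ▸ hy)
  -- key inequality from optimality
  have keyTc : Tc.ncard ≤ (Tu \ D).ncard := by
    set P : V → V → Prop := fun w x =>
      (w ≠ u ∧ w ≠ c ∧ inCompAbove G le w x) ∨ (w = c ∧ x ∈ Tu) ∨ (w = u ∧ x ∈ Tu ∧ x ∉ D)
      with hP
    set H' : V → Set V := fun x => {w | P w x} with hH'
    have hhub : IsHubLabeling G H' := by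
      intro x y
      obtain ⟨m, hm, hmin⟩ := exists_min hle (Set.toFinite {z | z ∈ (tp hT x y).support})
        ⟨x, Walk.start_mem_support _⟩
      have hm : m ∈ (tp hT x y).support := hm
      have hxm : inCompAbove G le m x := by
        refine ⟨((tp hT x y).takeUntil m hm).reverse, fun z hz => ?_⟩
        rw [Walk.support_reverse, List.mem_reverse] at hz
        exact hmin z (Walk.support_takeUntil_subset _ hm hz)
      have hym : inCompAbove G le m y :=
        ⟨(tp hT x y).dropUntil m hm, fun z hz => hmin z (Walk.support_dropUntil_subset _ hm hz)⟩
      have honm : onPath G x y m := onPath_of_mem hT hm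
      by_cases hmc : m = c
      · rw [hmc] at hxm hym honm
        exact ⟨c, Or.inr (Or.inl ⟨rfl, hTcu hxm⟩),
          Or.inr (Or.inl ⟨rfl, hTcu hym⟩), honm⟩
      by_cases hmu : m = u
      · rw [hmu] at hxm hym hm honm
        have hxTu : x ∈ Tu := hxm
        have hyTu : y ∈ Tu := hym
        by_cases hxD : x ∈ D
        · refine ⟨c, Or.inr (Or.inl ⟨rfl, hxTu⟩), Or.inr (Or.inl ⟨rfl, hyTu⟩), ?_⟩
          apply onPath_of_mem hT
          have h1 : c ∈ (tp hT x u).support := mem_tp_symm hT hxD.2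
          exact tp_take hT hm h1
        by_cases hyD : y ∈ D
        · refine ⟨c, Or.inr (Or.inl ⟨rfl, hxTu⟩), Or.inr (Or.inl ⟨rfl, hyTu⟩), ?_⟩
          apply onPath_of_mem hT
          exact tp_drop hT hm hyD.2
        · exact ⟨u, Or.inr (Or.inr ⟨rfl, hxTu, hxD⟩), Or.inr (Or.inr ⟨rfl, hyTu, hyD⟩), honm⟩
      · exact ⟨m, Or.inl ⟨hmu, hmc, hxm⟩, Or.inl ⟨hmu, hmc, hym⟩, honm⟩
    have hLsum : ∑ x : V, (canonical G le x).ncard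
        = ∑ w : V, {x | inCompAbove G le w x}.ncard :=
      sum_ncard_comm (fun w x => inCompAbove G le w x)
    have hRsum : ∑ x : V, (H' x).ncard = ∑ w : V, {x | P w x}.ncard :=
      sum_ncard_comm P
    have hsum := hopt H' hhub
    rw [hLsum, hRsum] at hsum
    have hgc : {x | P c x} = Tu := by
      ext x
      constructor
      · rintro (⟨_, hcc, _⟩ | ⟨_, hx⟩ | ⟨hcu2, _⟩)
        · exact absurd rfl hcc
        · exact hx
        · exact absurd hcu2 hne
      · intro hx
        exact Or.inr (Or.inl ⟨rfl, hx⟩)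
    have hgu : {x | P u x} = Tu \ D := by
      ext x
      constructor
      · rintro (⟨huu, _⟩ | ⟨huc2, _⟩ | ⟨_, h1, h2⟩)
        · exact absurd rfl huu
        · exact absurd huc2.symm hne
        · exact ⟨h1, h2⟩
      · rintro ⟨h1, h2⟩
        exact Or.inr (Or.inr ⟨rfl, h1, h2⟩)
    have hcols : ∀ w, w ≠ u → w ≠ c →
        {x | inCompAbove G le w x}.ncard = {x | P w x}.ncard := by
      intro w hwu hwc
      congr 1
      ext x
      constructor
      · intro hx
        exact Or.inl ⟨hwu, hwc, hx⟩
      · rintro (⟨_, _, hx⟩ | ⟨h1, _⟩ | ⟨h1, _⟩)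
        · exact hx
        · exact absurd h1 hwc
        · exact absurd h1 hwu
    have hid : {x | P u x}.ncard + {x | P c x}.ncard
          + ∑ w : V, {x | inCompAbove G le w x}.ncard
        = {x | inCompAbove G le u x}.ncard + {x | inCompAbove G le c x}.ncard
          + ∑ w : V, {x | P w x}.ncard :=
      sum_three _ _ u c (Ne.symm hne) hcols
    have e1 : ({x | inCompAbove G le u x} : Set V) = Tu := rfl
    have e2 : ({x | inCompAbove G le c x} : Set V) = Tc := rfl
    rw [e1, e2, hgc, hgu] at hid
    omega
  have hkey : Tc.ncard + D.ncard ≤ Tu.ncard := by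
    have h1 : (Tu \ D).ncard = Tu.ncard - D.ncard := Set.ncard_diff hDTu
    have h2 : D.ncard ≤ Tu.ncard := Set.ncard_le_ncard hDTu
    omega
  -- Msep c is at most the size of D
  have hMc_eq : Msep G le c = Tc.ncard - maxCompCard G (Tc \ {c}) := rfl
  have hMu_eq : Msep G le u = Tu.ncard - maxCompCard G (Tu \ {u}) := rfl
  have hMsc : Msep G le c ≤ D.ncard := by
    by_cases hTD : (Tc \ D).Nonempty
    · obtain ⟨x1, hx1⟩ := hTD
      obtain ⟨hx1c', hx1d⟩ := hx1
      have hx1c : x1 ≠ c := fun h => hx1d (h ▸ hcD)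
      have hcomp : Tc \ D ⊆ compIn G (Tc \ {c}) x1 := by
        intro x2 hx2
        obtain ⟨hx2c', hx2d⟩ := hx2
        refine ⟨tp hT x1 x2, fun z hz => ?_⟩
        have hzTc : z ∈ Tc := by
          have hsub : (tp hT x1 x2).support
              ⊆ ((tp hT c x1).reverse.append (tp hT c x2)).support :=
            tp_support_subset hT _
          rcases (Walk.mem_support_append_iff _ _).mp (hsub hz) with h | h
          · rw [Walk.support_reverse, List.mem_reverse] at h
            exact inComp_support_mem hT hx1c' z h
          · exact inComp_support_mem hT hx2c' z h
        have hzc : z ≠ c := by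
          rintro rfl
          have hsub2 : (tp hT x1 x2).support
              ⊆ ((tp hT u x1).reverse.append (tp hT u x2)).support :=
            tp_support_subset hT _
          rcases (Walk.mem_support_append_iff _ _).mp (hsub2 hz) with h | h
          · rw [Walk.support_reverse, List.mem_reverse] at h
            exact hx1d ⟨hTcu hx1c', h⟩
          · exact hx2d ⟨hTcu hx2c', h⟩
        exact ⟨hzTc, hzc⟩
      have hle1 : (Tc \ D).ncard ≤ maxCompCard G (Tc \ {c}) :=
        (Set.ncard_le_ncard hcomp).trans (le_maxCompCard ⟨hx1c', hx1c⟩)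
      have hdiff : (Tc \ D).ncard = Tc.ncard - D.ncard := Set.ncard_diff hDTc
      have hDn : D.ncard ≤ Tc.ncard := Set.ncard_le_ncard hDTc
      omega
    · have hTcD : Tc = D := by
        apply Set.Subset.antisymm ?_ hDTc
        intro x hx
        by_contra h
        exact hTD ⟨x, hx, h⟩
      rw [hMc_eq, hTcD]
      omega
  have hMc_le : Msep G le c ≤ Tc.ncard := by omega
  have hAne : (Tu \ {u}).Nonempty := ⟨c, hcTu, hne⟩
  obtain ⟨w0, hw0A, hw0⟩ := maxCompCard_exists hAne
  by_cases hcase : compIn G (Tu \ {u}) w0 = Tc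
  · have hmax : maxCompCard G (Tu \ {u}) = Tc.ncard := by rw [hw0, hcase]
    omega
  · have hdisj : Disjoint (compIn G (Tu \ {u}) w0) Tc := by
      rw [Set.disjoint_left]
      intro z hz1 hz2
      apply hcase
      have e1 := compIn_eq_of_mem hz1
      have hz2' : z ∈ compIn G (Tu \ {u}) c := by rw [hchild] at hz2; exact hz2
      have e2 := compIn_eq_of_mem hz2'
      rw [← e1, e2, ← hchild]
    have hTcsub : Tc ⊆ Tu \ {u} := by
      rw [hchild]; exact compIn_subset
    have hun : (compIn G (Tu \ {u}) w0).ncard + Tc.ncard ≤ (Tu \ {u}).ncard := by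
      rw [← Set.ncard_union_eq hdisj]
      exact Set.ncard_le_ncard (Set.union_subset compIn_subset hTcsub)
    have huTu : u ∈ Tu := inComp_self hle u
    have hA1 : (Tu \ {u}).ncard = Tu.ncard - 1 := Set.ncard_diff_singleton_of_mem huTu
    have hpos : 0 < Tu.ncard := (Set.ncard_pos (Set.toFinite _)).mpr ⟨u, inComp_self hle u⟩
    omega

end HLaux

theorem Msep_monotone_of_optimal {V : Type*} [Fintype V]
    (G : SimpleGraph V) (hT : G.IsTree)
    (le : V → V → Prop) (hle : IsLinearOrder V le)
    (hopt : ∀ H' : V → Set V, IsHubLabeling G H' →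
      ∑ u : V, (canonical G le u).ncard ≤ ∑ u : V, (H' u).ncard) :
    ∀ u v : V, u ≠ v → inCompAbove G le u v → Msep G le v ≤ Msep G le u := by
  classical
  haveI := hle
  suffices H : ∀ n : ℕ, ∀ u v : V, {w | inCompAbove G le u w}.ncard ≤ n →
      u ≠ v → inCompAbove G le u v → Msep G le v ≤ Msep G le u by
    intro u v h1 h2
    exact H {w | inCompAbove G le u w}.ncard u v le_rfl h1 h2
  intro n
  induction n with
  | zero =>
    intro u v hn _ _
    have hpos : 0 < {w | inCompAbove G le u w}.ncard :=
      (Set.ncard_pos (Set.toFinite _)).mpr ⟨u, HLaux.inComp_self hle u⟩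
    omega
  | succ n ih =>
    intro u v hn hne hv
    set A := {w | inCompAbove G le u w} \ {u} with hA
    have hvA : v ∈ A := ⟨hv, fun h => hne (Set.mem_singleton_iff.mp h).symm⟩
    obtain ⟨c, hcC, hcmin⟩ :=
      HLaux.exists_min hle (Set.toFinite _) ⟨v, HLaux.mem_compIn_self hvA⟩
    have hcA : c ∈ A := HLaux.compIn_subset hcC
    have hcu : inCompAbove G le u c := hcA.1
    have hcne : c ≠ u := fun h => hcA.2 (by simp [h])
    have hCc : compIn G A c = compIn G A v := HLaux.compIn_eq_of_mem hcC
    have hchild : {w | inCompAbove G le c w} = compIn G A c := by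
      apply Set.Subset.antisymm
      · rintro x ⟨p, hp⟩
        refine ⟨p, fun y hy => ?_⟩
        have hyc : inCompAbove G le c y :=
          ⟨p.takeUntil y hy, fun z hz => hp z (Walk.support_takeUntil_subset _ hy hz)⟩
        refine ⟨HLaux.inComp_trans hle hcu hyc, fun hyu => ?_⟩
        have hyu' : y = u := hyu
        exact hcne (Std.Antisymm.antisymm _ _ (hyu' ▸ hp y hy) (HLaux.le_of_inComp hcu))
      · rintro x ⟨p, hp⟩
        refine ⟨p, fun y hy => ?_⟩
        have hyC : y ∈ compIn G A c := HLaux.support_subset_compIn p hp y hy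
        rw [hCc] at hyC
        exact hcmin y hyC
    have hstep := HLaux.child_step hT hle hopt hcne hcu hchild
    by_cases hvc : v = c
    · rw [hvc]; exact hstep
    · have hvTc : inCompAbove G le c v := by
        have hvCc : v ∈ compIn G A c := by
          rw [hCc]; exact HLaux.mem_compIn_self hvA
        have := hchild ▸ hvCc
        exact this
      have hTcn : {w | inCompAbove G le c w}.ncard ≤ n := by
        have hsub : {w | inCompAbove G le c w} ⊆ A := by
          rw [hchild]; exact HLaux.compIn_subset
        have h1 : {w | inCompAbove G le c w}.ncard ≤ A.ncard := Set.ncard_le_ncard hsub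
        have h2 : A.ncard = {w | inCompAbove G le u w}.ncard - 1 :=
          Set.ncard_diff_singleton_of_mem (HLaux.inComp_self hle u)
        have h3 : 0 < {w | inCompAbove G le u w}.ncard :=
          (Set.ncard_pos (Set.toFinite _)).mpr ⟨u, HLaux.inComp_self hle u⟩
        omega
      exact (ih c v hTcn (Ne.symm hvc) hvTc).trans hstep
end
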